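/- arXiv:2512.17128 — 9 statements merged into one kernel-verified Lean document; each statement's English description precedes it below -/
import Mathlib

section
/- Let q be a prime power, let C ⊆ 𝔽_{q²}^n be a linear code, and let v = (v₁,…,v_n) ∈ (𝔽_{q²}^*)^n. Then φ(Hull_H(v·C)) = (v^{(q)}·C^{(q)}) ∩ ((1/v)·C^⊥E), where v^{(q)} = (v₁^q,…,v_n^q) and 1/v = (v₁^{-1},…,v_n^{-1}). In particular, if C′ ⊆ 𝔽_{q²}^n is a linear code such that C^⊥E = (v₁^{q+1},…,v_n^{q+1})·C′, then dim Hull_H(v·C) = dim(C^{(q)} ∩ C′). -/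
/-!
Since `|F| = q²`, the map `x ↦ x^q` is an involutive field automorphism, so `⟨x, d⟩_H = 0` iff
`⟨x^q, d⟩_E = 0`. Hence a vector `x ∈ v·C` lies in the Hermitian hull iff `v·x^q ∈ C^⊥E`, and
applying `φ` turns `Hull_H(v·C)` into `v^q·C^{(q)} ∩ v⁻¹·C^⊥E`. When `C^⊥E = v^{q+1}·C'` this is
`v^q·(C^{(q)} ∩ C')`; as `φ` and multiplication by `v^q` are injective, `Hull_H(v·C)` and
`C^{(q)} ∩ C'` have the same cardinality, hence the same dimension.
-/

noncomputable section

/-- The Euclidean dual of a linear code. -/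
def edual {F : Type*} [Field F] {n : ℕ} (C : Submodule F (Fin n → F)) :
    Submodule F (Fin n → F) where
  carrier := {x | ∀ c ∈ C, ∑ i, x i * c i = 0}
  add_mem' := by
    intro x y hx hy c hc
    have hx' := hx c hc
    have hy' := hy c hc
    have : ∑ i, (x + y) i * c i = (∑ i, x i * c i) + ∑ i, y i * c i := by
      rw [← Finset.sum_add_distrib]
      exact Finset.sum_congr rfl fun i _ => by simp [add_mul]
    simp only [Set.mem_setOf_eq] at *
    rw [this, hx', hy', add_zero]
  zero_mem' := by intro c hc; simp
  smul_mem' := by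
    intro s x hx c hc
    have hx' := hx c hc
    have : ∑ i, (s • x) i * c i = s * ∑ i, x i * c i := by
      rw [Finset.mul_sum]
      exact Finset.sum_congr rfl fun i _ => by simp [mul_assoc]
    simp only [Set.mem_setOf_eq] at *
    rw [this, hx', mul_zero]
/-- The Hermitian dual of a linear code over a field with `q^2` elements. -/
def hdual {F : Type*} [Field F] (q : ℕ) {n : ℕ} (C : Submodule F (Fin n → F)) :
    Submodule F (Fin n → F) where
  carrier := {x | ∀ c ∈ C, ∑ i, x i * c i ^ q = 0}
  add_mem' := by
    intro x y hx hy c hc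
    have hx' := hx c hc
    have hy' := hy c hc
    have : ∑ i, (x + y) i * c i ^ q = (∑ i, x i * c i ^ q) + ∑ i, y i * c i ^ q := by
      rw [← Finset.sum_add_distrib]
      exact Finset.sum_congr rfl fun i _ => by simp [add_mul]
    simp only [Set.mem_setOf_eq] at *
    rw [this, hx', hy', add_zero]
  zero_mem' := by intro c hc; simp
  smul_mem' := by
    intro s x hx c hc
    have hx' := hx c hc
    have : ∑ i, (s • x) i * c i ^ q = s * ∑ i, x i * c i ^ q := by
      rw [Finset.mul_sum]
      exact Finset.sum_congr rfl fun i _ => by simp [mul_assoc]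
    simp only [Set.mem_setOf_eq] at *
    rw [this, hx', mul_zero]
/-- Coordinatewise multiplication by a fixed vector, as a linear map. -/
def diagMul {F : Type*} [Field F] {n : ℕ} (v : Fin n → F) :
    (Fin n → F) →ₗ[F] (Fin n → F) where
  toFun x := fun i => v i * x i
  map_add' x y := by funext i; simp [mul_add]
  map_smul' s x := by funext i; simp [smul_eq_mul]; ring

section HermitianHull

open Function Set Module

theorem finrank_eq_of_natCard_eq {K V W : Type*} [Field K] [Finite K] [AddCommGroup V]
    [Module K V] [Module.Finite K V] [AddCommGroup W] [Module K W] [Module.Finite K W]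
    (h : Nat.card V = Nat.card W) : finrank K V = finrank K W := by
  rw [Module.natCard_eq_pow_finrank (K := K) (V := V),
    Module.natCard_eq_pow_finrank (K := K) (V := W)] at h
  exact Nat.pow_right_injective Finite.one_lt_card h

section CardEqSq

variable {F : Type*} [Field F] [Fintype F] {q : ℕ}

theorem add_pow_of_card_eq_sq (hq : IsPrimePow q) (hF : Fintype.card F = q ^ 2) (x y : F) :
    (x + y) ^ q = x ^ q + y ^ q := by
  obtain ⟨p, k, hp, hk, rfl⟩ := hq
  have : Fact p.Prime := ⟨hp.nat_prime⟩
  have : CharP F p := charP_of_card_eq_prime_pow (hF.trans (pow_mul p k 2).symm)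
  exact add_pow_char_pow x y p k

theorem sum_pow_of_card_eq_sq (hq : IsPrimePow q) (hF : Fintype.card F = q ^ 2) {ι : Type*}
    (s : Finset ι) (f : ι → F) : (∑ i ∈ s, f i) ^ q = ∑ i ∈ s, f i ^ q :=
  map_sum (AddMonoidHom.mk' (· ^ q) (add_pow_of_card_eq_sq hq hF)) f s

theorem pow_pow_of_card_eq_sq (hF : Fintype.card F = q ^ 2) (x : F) : (x ^ q) ^ q = x := by
  rw [← pow_mul, ← sq, ← hF, FiniteField.pow_card]

end CardEqSq

variable {F : Type*} [Field F] {n : ℕ}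

def hermitianHull (q : ℕ) (C : Submodule F (Fin n → F)) : Submodule F (Fin n → F) :=
  C ⊓ hdual q C

theorem coe_diagMul (v : Fin n → F) : ⇑(diagMul v) = (v * ·) := rfl

theorem mem_edual_map_diagMul {v y : Fin n → F} {C : Submodule F (Fin n → F)} :
    y ∈ edual (C.map (diagMul v)) ↔ v * y ∈ edual C := by
  simp only [edual, Submodule.mem_map, coe_diagMul, forall_exists_index, and_imp,
    forall_apply_eq_imp_iff₂, Submodule.mem_mk, AddSubmonoid.mem_mk, AddSubsemigroup.mem_mk,
    mem_ofPred_eq, Pi.mul_apply, mul_assoc, mul_left_comm]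

theorem preimage_mul_left_eq_image_inv {v : Fin n → F} (hv : ∀ i, v i ≠ 0)
    (s : Set (Fin n → F)) : (v * ·) ⁻¹' s = (v⁻¹ * ·) '' s := by
  have hvv : v * v⁻¹ = 1 := funext fun i => mul_inv_cancel₀ (hv i)
  have hleft : LeftInverse (v * ·) (v⁻¹ * ·) := fun x =>
    show v * (v⁻¹ * x) = x by rw [← mul_assoc, hvv, one_mul]
  have hright : RightInverse (v * ·) (v⁻¹ * ·) := fun x =>
    show v⁻¹ * (v * x) = x by rw [← mul_assoc, mul_comm v⁻¹, hvv, one_mul]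
  exact (congrFun (image_eq_preimage_of_inverse hleft hright) s).symm

section CardEqSq

variable [Fintype F] {q : ℕ}

theorem pow_left_injective_of_card_eq_sq (hF : Fintype.card F = q ^ 2) :
    Injective fun x : Fin n → F => x ^ q :=
  LeftInverse.injective (g := (· ^ q)) fun x => funext fun i => pow_pow_of_card_eq_sq hF (x i)

/-- The code `C^{(q)}`. -/
def frobeniusCode (hq : IsPrimePow q) (hF : Fintype.card F = q ^ 2)
    (C : Submodule F (Fin n → F)) : Submodule F (Fin n → F) where
  carrier := (· ^ q) '' C
  add_mem' := by
    rintro _ _ ⟨a, ha, rfl⟩ ⟨b, hb, rfl⟩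
    exact ⟨a + b, C.add_mem ha hb, funext fun i => add_pow_of_card_eq_sq hq hF (a i) (b i)⟩
  zero_mem' := ⟨0, C.zero_mem, zero_pow hq.ne_zero⟩
  smul_mem' := by
    rintro s _ ⟨a, ha, rfl⟩
    refine ⟨s ^ q • a, C.smul_mem _ ha, funext fun i => ?_⟩
    simp only [Pi.pow_apply, Pi.smul_apply, smul_eq_mul, mul_pow, pow_pow_of_card_eq_sq hF]

theorem mem_hdual_iff_pow_mem_edual (hq : IsPrimePow q) (hF : Fintype.card F = q ^ 2)
    {D : Submodule F (Fin n → F)} {x : Fin n → F} : x ∈ hdual q D ↔ x ^ q ∈ edual D := by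
  refine forall₂_congr fun d _ => ?_
  -- raising to the `q`-th power is injective and turns `⟨x, d⟩_H` into `⟨x^q, d⟩_E`
  rw [← pow_eq_zero_iff hq.ne_zero, sum_pow_of_card_eq_sq hq hF]
  simp only [mul_pow, pow_pow_of_card_eq_sq hF, Pi.pow_apply]

theorem coe_hermitianHull_map_diagMul (hq : IsPrimePow q) (hF : Fintype.card F = q ^ 2)
    (C : Submodule F (Fin n → F)) (v : Fin n → F) :
    (hermitianHull q (C.map (diagMul v)) : Set (Fin n → F)) =
      (C.map (diagMul v) : Set (Fin n → F)) ∩ (· ^ q) ⁻¹' ((v * ·) ⁻¹' edual C) := by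
  ext x
  simp only [hermitianHull, Submodule.coe_inf, mem_inter_iff, mem_preimage, SetLike.mem_coe,
    mem_hdual_iff_pow_mem_edual hq hF, mem_edual_map_diagMul]

theorem image_pow_hermitianHull_map_diagMul (hq : IsPrimePow q)
    (hF : Fintype.card F = q ^ 2) (C : Submodule F (Fin n → F)) {v : Fin n → F}
    (hv : ∀ i, v i ≠ 0) :
    (· ^ q) '' (hermitianHull q (C.map (diagMul v)) : Set (Fin n → F)) =
      (v ^ q * ·) '' ((· ^ q) '' C) ∩ (v⁻¹ * ·) '' edual C := by
  rw [coe_hermitianHull_map_diagMul hq hF, image_inter_preimage,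
    preimage_mul_left_eq_image_inv hv, Submodule.map_coe, coe_diagMul, image_image, image_image]
  simp only [mul_pow]

theorem finrank_hermitianHull_map_diagMul (hq : IsPrimePow q) (hF : Fintype.card F = q ^ 2)
    (C : Submodule F (Fin n → F)) {v : Fin n → F} (hv : ∀ i, v i ≠ 0)
    {C' : Submodule F (Fin n → F)} (hC' : edual C = C'.map (diagMul (v ^ (q + 1)))) :
    finrank F (hermitianHull q (C.map (diagMul v))) =
      finrank F ↥(frobeniusCode hq hF C ⊓ C') := by
  have hcoef : v⁻¹ * v ^ (q + 1) = v ^ q := funext fun i => by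
    simp only [Pi.mul_apply, Pi.inv_apply, Pi.pow_apply, pow_succ']
    field_simp [hv i]
  have hunit : IsUnit (v ^ q) := (Pi.isUnit_iff.mpr fun i => (hv i).isUnit).pow q
  have hperp : (v⁻¹ * ·) '' (edual C : Set (Fin n → F)) = (v ^ q * ·) '' C' := by
    rw [hC', Submodule.map_coe, coe_diagMul, image_image]
    simp_rw [← mul_assoc, hcoef]
  have himage : (· ^ q) '' (hermitianHull q (C.map (diagMul v)) : Set (Fin n → F)) =
      (v ^ q * ·) '' (frobeniusCode hq hF C ⊓ C' : Submodule F (Fin n → F)) := by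
    rw [image_pow_hermitianHull_map_diagMul hq hF C hv, hperp, Submodule.coe_inf,
      image_inter hunit.mul_right_injective]
    rfl
  apply finrank_eq_of_natCard_eq
  calc Nat.card (hermitianHull q (C.map (diagMul v)))
      = Nat.card ((· ^ q) '' (hermitianHull q (C.map (diagMul v)) : Set (Fin n → F))) :=
        (Nat.card_image_of_injective (pow_left_injective_of_card_eq_sq hF) _).symm
    _ = Nat.card ((v ^ q * ·) '' (frobeniusCode hq hF C ⊓ C' : Submodule F (Fin n → F))) := by
        rw [himage]
    _ = Nat.card (frobeniusCode hq hF C ⊓ C' : Submodule F (Fin n → F)) :=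
        Nat.card_image_of_injective hunit.mul_right_injective _

end CardEqSq

end HermitianHull

/-- For a linear code `C ⊆ 𝔽_{q²}ⁿ` and a vector `v` of nonzero entries,
the image under the coordinatewise `q`-th power map `φ` of the Hermitian hull of `v·C`
equals `(v^{(q)}·C^{(q)}) ∩ ((1/v)·C^⊥E)`.  In particular, if `C'` is a linear code with
`C^⊥E = (v₁^{q+1},…,v_n^{q+1})·C'`, then
`dim Hull_H(v·C) = dim (C^{(q)} ∩ C')`. -/
theorem frobenius_image_hermitianHull_eq_and_finrank_hermitianHull
    {q n : ℕ} (hq : IsPrimePow q) {F : Type*} [Field F] [Fintype F]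
    (hF : Fintype.card F = q ^ 2) (C : Submodule F (Fin n → F))
    (v : Fin n → F) (hv : ∀ i, v i ≠ 0) :
    ((fun x : Fin n → F => fun i => x i ^ q) ''
        ((Submodule.map (diagMul v) C ⊓ hdual q (Submodule.map (diagMul v) C) :
            Submodule F (Fin n → F)) : Set (Fin n → F)))
      = ((fun x : Fin n → F => fun i => v i ^ q * x i) ''
            ((fun x : Fin n → F => fun i => x i ^ q) '' (C : Set (Fin n → F))))
          ∩ ((fun x : Fin n → F => fun i => (v i)⁻¹ * x i) ''
              (edual C : Set (Fin n → F)))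
    ∧ ∀ C' : Submodule F (Fin n → F),
        edual C = Submodule.map (diagMul fun i => v i ^ (q + 1)) C' →
        Module.finrank F
            ↥(Submodule.map (diagMul v) C ⊓ hdual q (Submodule.map (diagMul v) C))
          = Module.finrank F
              ↥(Submodule.span F
                  (((fun x : Fin n → F => fun i => x i ^ q) '' (C : Set (Fin n → F)))
                    ∩ (C' : Set (Fin n → F)))) := by
  refine ⟨image_pow_hermitianHull_map_diagMul hq hF C hv, fun C' hC' => ?_⟩
  refine (finrank_hermitianHull_map_diagMul hq hF C hv hC').trans ?_
  exact congrArg (fun S : Submodule F (Fin n → F) => Module.finrank F S)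
    (Submodule.span_eq (frobeniusCode hq hF C ⊓ C')).symm

end
end

section
/- Let F be a field, let a₁,…,a_n be n distinct elements of F, and let 0 ≤ k ≤ n−2. Let C = {(f(a₁),…,f(a_n)) : f ∈ F[X], deg f ≤ k}. Then the Euclidean dual of C is C^⊥E = {(g(a₁)·w₁,…,g(a_n)·w_n) : g ∈ F[X], deg g ≤ n−k−2}, where w_i = (∏_{j≠i}(a_i−a_j))^{-1} (equivalently w_i = 1/h′(a_i) for h(X) = ∏_{j=1}^n (X−a_j)). -/
noncomputable section

open Finset Polynomial

/-- The Euclidean dual of a set of words: all vectors orthogonal (for the Euclidean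
inner product) to every element of the set. -/
def edualSet {F : Type*} [Field F] {n : ℕ} (S : Set (Fin n → F)) : Set (Fin n → F) :=
  {x | ∀ c ∈ S, ∑ i, x i * c i = 0}

lemma coeff_lagrange_basis {F : Type*} [Field F] {n : ℕ} (a : Fin n → F)
    (ha : Function.Injective a) (i : Fin n) :
    (Lagrange.basis Finset.univ a i).coeff (n - 1)
      = ∏ j ∈ Finset.univ.erase i, (a i - a j)⁻¹ := by
  have hvs : Set.InjOn a (Finset.univ : Finset (Fin n)) := ha.injOn
  have hdeg := Lagrange.natDegree_basis hvs (Finset.mem_univ i)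
  rw [Finset.card_univ, Fintype.card_fin] at hdeg
  rw [← hdeg, ← Polynomial.leadingCoeff]
  unfold Lagrange.basis
  rw [Polynomial.leadingCoeff_prod]
  refine Finset.prod_congr rfl fun j _ => ?_
  rw [Lagrange.basisDivisor, Polynomial.leadingCoeff_mul, Polynomial.leadingCoeff_C,
    (Polynomial.monic_X_sub_C _).leadingCoeff, mul_one]

/-- Key lemma: for a polynomial of degree `< n`, the weighted sum of its values at the
nodes equals its coefficient of degree `n - 1`. -/
lemma sum_eval_mul_weight {F : Type*} [Field F] {n : ℕ} (a : Fin n → F)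
    (ha : Function.Injective a) (p : F[X]) (hp : p.degree < (n : WithBot ℕ)) :
    ∑ i, p.eval (a i) * (∏ j ∈ Finset.univ.erase i, (a i - a j))⁻¹ = p.coeff (n - 1) := by
  have hvs : Set.InjOn a (Finset.univ : Finset (Fin n)) := ha.injOn
  have hd : p.degree < (#(Finset.univ : Finset (Fin n)) : WithBot ℕ) := by
    simpa using hp
  conv_rhs => rw [Lagrange.eq_interpolate hvs hd]
  rw [Lagrange.interpolate_apply, Polynomial.finset_sum_coeff]
  refine Finset.sum_congr rfl fun i _ => ?_
  rw [Polynomial.coeff_C_mul, coeff_lagrange_basis a ha i, Finset.prod_inv_distrib]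

lemma degree_le_of_lt_succ {F : Type*} [Field F] {p : F[X]} {m : ℕ}
    (h : p.degree < ((m + 1 : ℕ) : WithBot ℕ)) : p.degree ≤ (m : WithBot ℕ) := by
  rcases eq_or_ne p 0 with rfl | hp
  · simp
  rw [Polynomial.degree_eq_natDegree hp] at h ⊢
  exact_mod_cast Nat.lt_succ_iff.mp (by exact_mod_cast h)

lemma degree_le_pred_of_coeff_zero {F : Type*} [Field F] {p : F[X]} {m : ℕ}
    (h1 : p.degree ≤ (m : WithBot ℕ)) (h2 : p.coeff m = 0) :
    p.degree ≤ ((m - 1 : ℕ) : WithBot ℕ) := by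
  rw [Polynomial.degree_le_iff_coeff_zero]
  intro m' hm'
  have hm'' : m - 1 < m' := by exact_mod_cast hm'
  rcases eq_or_lt_of_le (show m ≤ m' by omega) with rfl | hlt
  · exact h2
  · exact Polynomial.coeff_eq_zero_of_degree_lt (lt_of_le_of_lt h1 (by exact_mod_cast hlt))

/-- Let `a₁, …, a_n` be distinct elements of a field `F` and let
`0 ≤ k ≤ n − 2`.  The Euclidean dual of the evaluation code
`C = {(f(a₁),…,f(a_n)) : deg f ≤ k}` is
`{(g(a₁)w₁,…,g(a_n)w_n) : deg g ≤ n−k−2}` where `wᵢ = (∏_{j≠i} (aᵢ−a_j))⁻¹`. -/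
theorem euclideanDual_evaluationCode
    {F : Type*} [Field F] {n k : ℕ} (a : Fin n → F)
    (ha : Function.Injective a) (hk : k + 2 ≤ n) :
    edualSet {x : Fin n → F | ∃ f : Polynomial F,
        f.degree ≤ (k : ℕ) ∧ x = fun i => Polynomial.eval (a i) f}
      = {x : Fin n → F | ∃ g : Polynomial F, g.degree ≤ ((n - k - 2 : ℕ) : WithBot ℕ) ∧
          x = fun i => Polynomial.eval (a i) g * (∏ j ∈ Finset.univ.erase i, (a i - a j))⁻¹} := by
  have hvs : Set.InjOn a (Finset.univ : Finset (Fin n)) := ha.injOn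
  have hprodne : ∀ i : Fin n, (∏ j ∈ Finset.univ.erase i, (a i - a j)) ≠ 0 := by
    intro i
    rw [Finset.prod_ne_zero_iff]
    intro j hj
    exact sub_ne_zero_of_ne fun h => (Finset.mem_erase.mp hj).1 (ha h.symm)
  ext x
  constructor
  · -- dual ⊆ GRS
    intro hx
    set g : F[X] := Lagrange.interpolate Finset.univ a
      (fun i => x i * ∏ j ∈ Finset.univ.erase i, (a i - a j)) with hg_def
    have hgeval : ∀ i : Fin n, g.eval (a i) = x i * ∏ j ∈ Finset.univ.erase i, (a i - a j) :=
      fun i => Lagrange.eval_interpolate_at_node _ hvs (Finset.mem_univ i)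
    have hglt : g.degree < (n : WithBot ℕ) := by
      have := Lagrange.degree_interpolate_lt hvs
        (r := fun i => x i * ∏ j ∈ Finset.univ.erase i, (a i - a j))
      rwa [Finset.card_univ, Fintype.card_fin] at this
    -- inductive degree bound
    have D : ∀ t : ℕ, t ≤ k + 1 → g.degree ≤ ((n - 1 - t : ℕ) : WithBot ℕ) := by
      intro t
      induction t with
      | zero =>
        intro _
        have : g.degree < ((n - 1 + 1 : ℕ) : WithBot ℕ) := by
          rwa [Nat.sub_add_cancel (by omega : 1 ≤ n)]
        simpa using degree_le_of_lt_succ this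
      | succ t ih =>
        intro ht
        have htk : t ≤ k := by omega
        have hDt := ih (by omega)
        -- coefficient of g at n - 1 - t vanishes
        have hXg : (X ^ t * g : F[X]).degree < (n : WithBot ℕ) := by
          calc (X ^ t * g : F[X]).degree ≤ (X ^ t : F[X]).degree + g.degree :=
                Polynomial.degree_mul_le _ _
            _ ≤ (t : WithBot ℕ) + ((n - 1 - t : ℕ) : WithBot ℕ) := by
                refine add_le_add ?_ hDt
                simp [Polynomial.degree_X_pow]
            _ = ((t + (n - 1 - t) : ℕ) : WithBot ℕ) := by push_cast; ring
            _ < (n : WithBot ℕ) := by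
                have : t + (n - 1 - t) < n := by omega
                exact_mod_cast this
        have hsum := sum_eval_mul_weight a ha (X ^ t * g) hXg
        have hdual := hx (fun i => Polynomial.eval (a i) (X ^ t : F[X]))
          ⟨X ^ t, by simpa [Polynomial.degree_X_pow] using (by exact_mod_cast htk :
            (t : WithBot ℕ) ≤ (k : WithBot ℕ)), rfl⟩
        have hsum0 : ∑ i, (X ^ t * g : F[X]).eval (a i) *
            (∏ j ∈ Finset.univ.erase i, (a i - a j))⁻¹ = 0 := by
          rw [← hdual]
          refine Finset.sum_congr rfl fun i _ => ?_
          rw [Polynomial.eval_mul, hgeval i, Polynomial.eval_pow, Polynomial.eval_X]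
          field_simp [hprodne i]
        have hcoeff : g.coeff (n - 1 - t) = 0 := by
          have h1 : (X ^ t * g : F[X]).coeff (n - 1) = 0 := by rw [← hsum, hsum0]
          have h2 : (X ^ t * g : F[X]).coeff (n - 1 - t + t) = g.coeff (n - 1 - t) :=
            Polynomial.coeff_X_pow_mul g t (n - 1 - t)
          rw [show n - 1 - t + t = n - 1 by omega, h1] at h2
          exact h2.symm
        have := degree_le_pred_of_coeff_zero hDt hcoeff
        rwa [show n - 1 - t - 1 = n - 1 - (t + 1) by omega] at this
    refine ⟨g, ?_, ?_⟩
    · have := D (k + 1) le_rfl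
      rwa [show n - 1 - (k + 1) = n - k - 2 by omega] at this
    · funext i
      rw [hgeval i, mul_assoc, mul_inv_cancel₀ (hprodne i), mul_one]
  · -- GRS ⊆ dual
    rintro ⟨g, hg, rfl⟩ c ⟨f, hf, rfl⟩
    have hfg : (g * f).degree < (n : WithBot ℕ) := by
      calc (g * f).degree ≤ g.degree + f.degree := Polynomial.degree_mul_le _ _
        _ ≤ ((n - k - 2 : ℕ) : WithBot ℕ) + (k : WithBot ℕ) := add_le_add hg hf
        _ = ((n - k - 2 + k : ℕ) : WithBot ℕ) := by push_cast; ring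
        _ < (n : WithBot ℕ) := by
            have : n - k - 2 + k < n := by omega
            exact_mod_cast this
    have hsum := sum_eval_mul_weight a ha (g * f) hfg
    have hcoeff : (g * f).coeff (n - 1) = 0 := by
      refine Polynomial.coeff_eq_zero_of_degree_lt ?_
      calc (g * f).degree ≤ g.degree + f.degree := Polynomial.degree_mul_le _ _
        _ ≤ ((n - k - 2 : ℕ) : WithBot ℕ) + (k : WithBot ℕ) := add_le_add hg hf
        _ = ((n - k - 2 + k : ℕ) : WithBot ℕ) := by push_cast; ring
        _ < ((n - 1 : ℕ) : WithBot ℕ) := by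
            have : n - k - 2 + k < n - 1 := by omega
            exact_mod_cast this
    rw [← hcoeff, ← hsum]
    refine Finset.sum_congr rfl fun i _ => ?_
    rw [Polynomial.eval_mul]
    ring

end
end

section
/- Let q be a prime power, n = n₀q+q₁ with 1 ≤ n₀ ≤ q−1 and 0 ≤ q₁ ≤ q−1, and k = k₀q+q₀ with 1 ≤ k₀ < ⌊(q₁+n₀q−q₀)/q⌋, 0 ≤ q₀ ≤ q−1, and q₁−q₀ ≤ 1. If k₀ ≤ q₁+q−q₀−2 and q₀ ≤ n₀−k₀−2, then |L(q²−1)| = k₀(n₀−k₀)+q₀+1. -/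
noncomputable section

/-- The set `L(N)`: residues `m ∈ {0,…,N−1}` for which there are `0 ≤ i ≤ k` and
`0 ≤ j ≤ n−k−2` with `m ≡ q·i (mod N)` and `m ≡ j (mod N)`. -/
def Lset (q n k N : ℕ) : Finset ℕ :=
  open scoped Classical in
  (Finset.range N).filter fun m =>
    ∃ i ∈ Finset.range (k + 1), ∃ j ∈ Finset.range (n - k - 1),
      (q * i) % N = m % N ∧ j % N = m % N

lemma mod_helper {q a b N : ℕ} (hN : N + 1 = q * q) (h : a + b * q < N) :
    q * (q * a + b) % N = a + b * q := by
  have key : q * (q * a + b) = a * N + (a + b * q) := by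
    calc q * (q * a + b) = (N + 1) * a + b * q := by rw [hN]; ring
    _ = a * N + (a + b * q) := by ring
  rw [key, add_comm (a * N), Nat.add_mul_mod_self_right, Nat.mod_eq_of_lt h]

set_option maxHeartbeats 2000000 in
/-- Cardinality of `L(q²−1)` in one of the four cases of
Theorem 3 of the paper. -/
theorem card_Lset_case_one
    {q n k n₀ q₁ k₀ q₀ : ℕ} (hq : IsPrimePow q)
    (hn : n = n₀ * q + q₁) (hn₀l : 1 ≤ n₀) (hn₀u : n₀ ≤ q - 1) (hq₁ : q₁ ≤ q - 1)
    (hk : k = k₀ * q + q₀) (hk₀l : 1 ≤ k₀) (hk₀u : k₀ < (q₁ + n₀ * q - q₀) / q)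
    (hq₀ : q₀ ≤ q - 1) (hq₁q₀ : (q₁ : ℤ) - (q₀ : ℤ) ≤ 1)
    (hc1 : (k₀ : ℤ) ≤ (q₁ : ℤ) + (q : ℤ) - (q₀ : ℤ) - 2)
    (hc2 : (q₀ : ℤ) ≤ (n₀ : ℤ) - (k₀ : ℤ) - 2) :
    ((Lset q n k (q ^ 2 - 1)).card : ℤ) = (k₀ : ℤ) * ((n₀ : ℤ) - (k₀ : ℤ)) + (q₀ : ℤ) + 1 := by
  classical
  have hq2 : 2 ≤ q := hq.two_le
  -- basic numeric facts
  have hn₀' : k₀ + q₀ + 2 ≤ n₀ := by omega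
  have hq4 : 4 ≤ q := by omega
  have hk₀q : k₀ + 3 ≤ q := by omega
  have hc1' : k₀ + q₀ + 2 ≤ q₁ + q := by omega
  have hq₁q₀' : q₁ ≤ q₀ + 1 := by omega
  have hq₁' : q₁ + 1 ≤ q := by omega
  have hq₀' : q₀ + 1 ≤ q := by omega
  set d : ℕ := n₀ - k₀ with hddef
  clear_value d
  have hd2 : q₀ + 2 ≤ d := by omega
  have hdq : d + 1 ≤ q := by omega
  set N : ℕ := q ^ 2 - 1 with hNdef
  clear_value N
  have hQ : N + 1 = q * q := by
    rw [hNdef, pow_two]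
    exact Nat.succ_pred_eq_of_pos (Nat.mul_pos (by omega) (by omega))
  -- n - k - 1
  have hmulnk : k₀ * q + 2 * q ≤ n₀ * q := by
    have h := Nat.mul_le_mul_right q (show k₀ + 2 ≤ n₀ by omega)
    have h2 : (k₀ + 2) * q = k₀ * q + 2 * q := by ring
    linarith
  have hdk : d * q + k₀ * q = n₀ * q := by
    have h : (d + k₀) * q = n₀ * q := by congr 1; omega
    have h2 : (d + k₀) * q = d * q + k₀ * q := by ring
    linarith
  have hkn : k + 1 ≤ n := by rw [hn, hk]; linarith
  have hMeq : (n - k - 1) + q₀ + 1 = d * q + q₁ := by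
    have h2 : (n - k - 1) + (k₀ * q + q₀) + 1 = n₀ * q + q₁ := by rw [← hk, ← hn]; omega
    linarith
  have hnN : n ≤ N := by
    have h := Nat.mul_le_mul_right q (show n₀ + 1 ≤ q by omega)
    have h2 : (n₀ + 1) * q = n₀ * q + q := by ring
    rw [hn]
    linarith
  -- the explicit description
  set f : ℕ × ℕ → ℕ := fun p => p.1 * q + p.2 with hfdef
  clear_value f
  set S : Finset (ℕ × ℕ) :=
    (Finset.range d ×ˢ Finset.range k₀) ∪ (Finset.range (q₀ + 1) ×ˢ {k₀}) with hSdef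
  clear_value S
  have hmemS : ∀ p : ℕ × ℕ, p ∈ S ↔ (p.1 < d ∧ p.2 < k₀) ∨ (p.1 < q₀ + 1 ∧ p.2 = k₀) := by
    intro p
    simp only [hSdef, Finset.mem_union, Finset.mem_product, Finset.mem_range,
      Finset.mem_singleton]
  -- an element with bounded base-q digits is < N
  have habN : ∀ a b : ℕ, a ≤ k₀ → b < q → a + b * q < N := by
    intro a b ha hb
    have h := Nat.mul_le_mul_right q hb
    have h2 : (b + 1) * q = b * q + q := by ring
    linarith
  have hset : Lset q n k N = S.image f := by
    ext m
    simp only [Lset, Finset.mem_filter, Finset.mem_range, Finset.mem_image]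
    constructor
    · rintro ⟨hmN, i, hi, j, hj, hqi, hjm⟩
      have hmm : m % N = m := Nat.mod_eq_of_lt hmN
      have hjN : j < N := lt_of_lt_of_le hj (le_trans (by omega : n - k - 1 ≤ n) hnN)
      rw [Nat.mod_eq_of_lt hjN, hmm] at hjm
      subst hjm
      set a : ℕ := i / q with hadef
      set b : ℕ := i % q with hbdef
      have hb : b < q := Nat.mod_lt _ (by omega)
      have hi' : q * a + b = i := Nat.div_add_mod i q
      clear_value a
      clear_value b
      have ha : a ≤ k₀ := by
        have hx : (k₀ + 1) * q = k₀ * q + q := by ring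
        have h1 : i < (k₀ + 1) * q := by rw [hk] at hi; linarith
        have h2 := (Nat.div_lt_iff_lt_mul (show 0 < q by omega)).mpr h1
        omega
      have hqiN : q * i % N = a + b * q := by
        rw [← hi']; exact mod_helper hQ (habN a b ha hb)
      rw [hmm, hqiN] at hqi
      rcases eq_or_lt_of_le ha with heq | hlt
      · -- a = k₀, then b ≤ q₀
        have hbq₀ : b ≤ q₀ := by
          rw [hk] at hi
          have h2 : q * a = k₀ * q := by rw [heq, mul_comm]
          linarith
        refine ⟨(b, a), ?_, ?_⟩
        · rw [hmemS]; right; exact ⟨by omega, heq⟩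
        · simp only [hfdef]; linarith
      · -- a < k₀, then b < d
        have hbd : b < d := by
          by_contra hbd
          push_neg at hbd
          have : d * q ≤ b * q := Nat.mul_le_mul_right q hbd
          linarith
        refine ⟨(b, a), ?_, ?_⟩
        · rw [hmemS]; left; exact ⟨hbd, hlt⟩
        · simp only [hfdef]; linarith
    · rintro ⟨⟨b, a⟩, hp, rfl⟩
      rw [hmemS] at hp
      simp only [hfdef]
      have ha : a ≤ k₀ := by rcases hp with ⟨_, h⟩ | ⟨_, h⟩ <;> omega
      have hb : b < q := by rcases hp with ⟨h, _⟩ | ⟨h, _⟩ <;> omega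
      have hab := habN a b ha hb
      have hmN : b * q + a < N := by linarith
      refine ⟨hmN, q * a + b, ?_, b * q + a, ?_, ?_, ?_⟩
      · -- i ≤ k
        rw [hk]
        rcases hp with ⟨_, hak⟩ | ⟨hbq₀, hak⟩
        · have hak' : a < k₀ := hak
          have h1 : q * (a + 1) ≤ q * k₀ := Nat.mul_le_mul_left q (by omega)
          have h2 : q * k₀ = k₀ * q := mul_comm q k₀
          have h3 : q * (a + 1) = q * a + q := by ring
          linarith
        · have hak' : a = k₀ := hak
          have h2 : q * a = k₀ * q := by rw [hak', mul_comm]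
          linarith
      · -- m < n - k - 1
        rcases hp with ⟨hbd, hak⟩ | ⟨hbq₀, hak⟩
        · have hbd' : b < d := hbd
          have h1 : (b + 1) * q ≤ d * q := Nat.mul_le_mul_right q hbd'
          have h3 : (b + 1) * q = b * q + q := by ring
          linarith
        · have hak' : a = k₀ := hak
          have hbq₀' : b < q₀ + 1 := hbq₀
          have h1 : (b + 2) * q ≤ d * q := Nat.mul_le_mul_right q (by omega)
          have h3 : (b + 2) * q = b * q + 2 * q := by ring
          linarith
      · rw [mod_helper hQ hab, Nat.mod_eq_of_lt hmN]; ring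
      · rfl
  -- cardinality
  have hinj : Set.InjOn f S := by
    intro p hp p' hp' hff
    rw [Finset.mem_coe, hmemS] at hp hp'
    have h2 : p.2 < q := by rcases hp with ⟨_, h⟩ | ⟨_, h⟩ <;> omega
    have h2' : p'.2 < q := by rcases hp' with ⟨_, h⟩ | ⟨_, h⟩ <;> omega
    simp only [hfdef] at hff
    have e2 : p.2 = p'.2 := by
      have h : (p.2 + p.1 * q) % q = (p'.2 + p'.1 * q) % q := by
        rw [add_comm, add_comm p'.2]; exact congrArg (· % q) hff
      rwa [Nat.add_mul_mod_self_right, Nat.add_mul_mod_self_right,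
        Nat.mod_eq_of_lt h2, Nat.mod_eq_of_lt h2'] at h
    have e1 : p.1 = p'.1 := by
      have h : p.1 * q = p'.1 * q := by linarith
      exact Nat.eq_of_mul_eq_mul_right (by omega) h
    exact Prod.ext e1 e2
  have hdisj : Disjoint (Finset.range d ×ˢ Finset.range k₀)
      ((Finset.range (q₀ + 1) : Finset ℕ) ×ˢ ({k₀} : Finset ℕ)) := by
    rw [Finset.disjoint_left]
    rintro ⟨x, y⟩ hxy hxy'
    simp only [Finset.mem_product, Finset.mem_range, Finset.mem_singleton] at hxy hxy'
    omega
  have hcard : (Lset q n k N).card = d * k₀ + (q₀ + 1) := by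
    rw [hset, Finset.card_image_of_injOn hinj, hSdef,
      Finset.card_union_of_disjoint hdisj]
    simp [Finset.card_product]
  rw [hcard]
  have hdz : (d : ℤ) = (n₀ : ℤ) - (k₀ : ℤ) := by omega
  push_cast
  rw [hdz]
  ring

end
end

section
/- Let q be a prime power, n = n₀q+q₁ with 1 ≤ n₀ ≤ q−1 and 0 ≤ q₁ ≤ q−1, and k = k₀q+q₀ with 1 ≤ k₀ < ⌊(q₁+n₀q−q₀)/q⌋, 0 ≤ q₀ ≤ q−1, and q₁−q₀ ≤ 1. If k₀ ≤ q₁+q−q₀−2 and q₀ ≥ n₀−k₀−1, then |L(q²−1)| = (k₀+1)(n₀−k₀). -/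
noncomputable section

private lemma qmul_mod_aux (q a b : ℕ) (ha : a + 2 ≤ q) (hb : b + 1 ≤ q) :
    q * (a * q + b) % (q ^ 2 - 1) = b * q + a := by
  have h1 : 1 ≤ q ^ 2 := by nlinarith
  have hkey : q * (a * q + b) = (q ^ 2 - 1) * a + (b * q + a) := by
    zify [h1]; ring
  rw [hkey, Nat.mul_add_mod]
  apply Nat.mod_eq_of_lt
  have h2 : (b + 1) * q ≤ q * q := Nat.mul_le_mul_right q hb
  have h3 : (b + 1) * q = b * q + q := by ring
  have h4 : q * q = q ^ 2 := by ring
  have h5 : b * q + a + 1 ≤ q ^ 2 - 1 := by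
    have : b * q + a + 2 ≤ q ^ 2 := by linarith
    omega
  omega

private lemma decomp_inj (q b a b' a' : ℕ) (hq : 0 < q) (ha : a < q) (ha' : a' < q)
    (h : b * q + a = b' * q + a') : b = b' ∧ a = a' := by
  have h1 : (b * q + a) % q = a := by
    rw [mul_comm, Nat.mul_add_mod, Nat.mod_eq_of_lt ha]
  have h2 : (b' * q + a') % q = a' := by
    rw [mul_comm, Nat.mul_add_mod, Nat.mod_eq_of_lt ha']
  have h3 : a = a' := by rw [← h1, ← h2, h]
  refine ⟨?_, h3⟩
  have h4 : b * q = b' * q := by omega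
  exact Nat.eq_of_mul_eq_mul_right hq h4

/-- Cardinality of `L(q²−1)` in one of the four cases of
Theorem 3 of the paper. -/
theorem card_Lset_case_two
    {q n k n₀ q₁ k₀ q₀ : ℕ} (hq : IsPrimePow q)
    (hn : n = n₀ * q + q₁) (hn₀l : 1 ≤ n₀) (hn₀u : n₀ ≤ q - 1) (hq₁ : q₁ ≤ q - 1)
    (hk : k = k₀ * q + q₀) (hk₀l : 1 ≤ k₀) (hk₀u : k₀ < (q₁ + n₀ * q - q₀) / q)
    (hq₀ : q₀ ≤ q - 1) (hq₁q₀ : (q₁ : ℤ) - (q₀ : ℤ) ≤ 1)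
    (hc1 : (k₀ : ℤ) ≤ (q₁ : ℤ) + (q : ℤ) - (q₀ : ℤ) - 2)
    (hc2 : (q₀ : ℤ) ≥ (n₀ : ℤ) - (k₀ : ℤ) - 1) :
    ((Lset q n k (q ^ 2 - 1)).card : ℤ) = ((k₀ : ℤ) + 1) * ((n₀ : ℤ) - (k₀ : ℤ)) := by
  classical
  have hq2 : 2 ≤ q := hq.two_le
  have hqpos : 0 < q := by omega
  have hn₀q : n₀ + 1 ≤ q := by omega
  have hq₁q : q₁ + 1 ≤ q := by omega
  have hq₀q : q₀ + 1 ≤ q := by omega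
  have hq₁q₀' : q₁ ≤ q₀ + 1 := by omega
  have hc1' : k₀ + q₀ + 2 ≤ q₁ + q := by omega
  have hc2' : n₀ ≤ q₀ + k₀ + 1 := by omega
  -- from the floor hypothesis
  have hdiv : (k₀ + 1) * q + q₀ ≤ q₁ + n₀ * q := by
    have h1 : k₀ + 1 ≤ (q₁ + n₀ * q - q₀) / q := hk₀u
    have h2 : (k₀ + 1) * q ≤ q₁ + n₀ * q - q₀ := (Nat.le_div_iff_mul_le hqpos).1 h1
    have h3 : q ≤ n₀ * q := Nat.le_mul_of_pos_left q hn₀l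
    omega
  have hexp1 : (n₀ + 1) * q = n₀ * q + q := by ring
  have hexp2 : (k₀ + 1) * q = k₀ * q + q := by ring
  have h5 : (k₀ + 1) * q < (n₀ + 1) * q := by linarith
  have hkn : k₀ + 1 ≤ n₀ := by
    have := Nat.lt_of_mul_lt_mul_right h5
    omega
  have hkq : k₀ + 2 ≤ q := by
    have h6 : (n₀ + 1) * q ≤ q * q := Nat.mul_le_mul_right q hn₀q
    have h7 : (k₀ + 1) * q < q * q := lt_of_lt_of_le h5 h6
    have := Nat.lt_of_mul_lt_mul_right h7
    omega
  -- n ≤ q² − 1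
  have hnN : n + 1 ≤ q ^ 2 := by
    have h6 : (n₀ + 1) * q ≤ q * q := Nat.mul_le_mul_right q hn₀q
    have h7 : q * q = q ^ 2 := by ring
    linarith
  have key : Lset q n k (q ^ 2 - 1) =
      Finset.image (fun p : ℕ × ℕ => p.1 * q + p.2)
        (Finset.range (n₀ - k₀) ×ˢ Finset.range (k₀ + 1)) := by
    ext m
    simp only [Lset, Finset.mem_filter, Finset.mem_range, Finset.mem_image,
      Finset.mem_product, Prod.exists]
    constructor
    · rintro ⟨hmN, i, hi, j, hj, hqi, hjm⟩
      have hjN : j < q ^ 2 - 1 := by omega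
      rw [Nat.mod_eq_of_lt hjN, Nat.mod_eq_of_lt hmN] at hjm
      have hmn : m + k + 2 ≤ n := by omega
      rw [Nat.mod_eq_of_lt hmN] at hqi
      set a := i / q with hadef
      set b := i % q with hbdef
      have hib : a * q + b = i := by
        rw [hadef, hbdef, Nat.div_add_mod']
      have hbq : b < q := Nat.mod_lt _ hqpos
      have hak : a ≤ k₀ := by
        have h1 : i / q ≤ k / q := Nat.div_le_div_right (by omega)
        have h2 : k / q = k₀ := by
          rw [hk, mul_comm, Nat.mul_add_div hqpos, Nat.div_eq_of_lt (by omega)]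
          omega
        omega
      have hmod : q * i % (q ^ 2 - 1) = b * q + a := by
        rw [← hib]
        exact qmul_mod_aux q a b (by omega) (by omega)
      have hm : m = b * q + a := by rw [← hqi, hmod]
      refine ⟨b, a, ⟨?_, by omega⟩, hm.symm⟩
      by_contra hbc
      push_neg at hbc
      have hb2 : n₀ ≤ b + k₀ := by omega
      have h1 : n₀ * q ≤ (b + k₀) * q := Nat.mul_le_mul_right q hb2
      have h2 : (b + k₀) * q = b * q + k₀ * q := by ring
      rw [hn, hk] at hmn
      linarith
    · rintro ⟨b, a, ⟨hb, ha⟩, rfl⟩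
      have ha' : a ≤ k₀ := by omega
      have hb' : b + k₀ + 1 ≤ n₀ := by omega
      -- m + k + 2 ≤ n
      have hmn : b * q + a + k + 2 ≤ n := by
        have h1 : (b + k₀ + 1) * q ≤ n₀ * q := Nat.mul_le_mul_right q hb'
        have h2 : (b + k₀ + 1) * q = b * q + k₀ * q + q := by ring
        rw [hn, hk]
        linarith
      have hmN : b * q + a < q ^ 2 - 1 := by omega
      refine ⟨hmN, a * q + b, ?_, b * q + a, by omega, ?_, ?_⟩
      · -- i ≤ k
        rcases eq_or_lt_of_le ha' with hEq | hlt
        · subst hEq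
          have hbq₀ : b ≤ q₀ := by omega
          rw [hk]; omega
        · have h1 : (a + 1) * q ≤ k₀ * q := Nat.mul_le_mul_right q (by omega)
          have h2 : (a + 1) * q = a * q + q := by ring
          have hbq : b < q := by omega
          rw [hk]
          linarith
      · rw [qmul_mod_aux q a b (by omega) (by omega)]
        exact (Nat.mod_eq_of_lt hmN).symm
      · rfl
  rw [key, Finset.card_image_of_injOn, Finset.card_product, Finset.card_range,
    Finset.card_range]
  · rw [Nat.cast_mul, Nat.cast_sub (by omega : k₀ ≤ n₀)]
    push_cast
    ring
  · rintro ⟨b, a⟩ hp ⟨b', a'⟩ hp' h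
    simp only [Finset.mem_coe, Finset.mem_product, Finset.mem_range] at hp hp'
    have := decomp_inj q b a b' a' hqpos (by omega) (by omega) h
    simp only [Prod.mk.injEq]
    exact this

end
end

section
/- Let q be a prime power, n = n₀q+q₁ with 1 ≤ n₀ ≤ q−1 and 0 ≤ q₁ ≤ q−1, and k = k₀q+q₀ with 1 ≤ k₀ < ⌊(q₁+n₀q−q₀)/q⌋, 0 ≤ q₀ ≤ q−1, and q₁−q₀ ≤ 1. If k₀ > q₁+q−q₀−2 and q₀ ≥ n₀−k₀−2, then |L(q²−1)| = (n₀−k₀−1)(k₀+1)+(q₁+q−q₀−1). -/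
noncomputable section

/-- Cardinality of `L(q²−1)` in one of the four cases of
Theorem 3 of the paper. -/
theorem card_Lset_case_four
    {q n k n₀ q₁ k₀ q₀ : ℕ} (hq : IsPrimePow q)
    (hn : n = n₀ * q + q₁) (hn₀l : 1 ≤ n₀) (hn₀u : n₀ ≤ q - 1) (hq₁ : q₁ ≤ q - 1)
    (hk : k = k₀ * q + q₀) (hk₀l : 1 ≤ k₀) (hk₀u : k₀ < (q₁ + n₀ * q - q₀) / q)
    (hq₀ : q₀ ≤ q - 1) (hq₁q₀ : (q₁ : ℤ) - (q₀ : ℤ) ≤ 1)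
    (hc1 : (k₀ : ℤ) > (q₁ : ℤ) + (q : ℤ) - (q₀ : ℤ) - 2)
    (hc2 : (q₀ : ℤ) ≥ (n₀ : ℤ) - (k₀ : ℤ) - 2) :
    ((Lset q n k (q ^ 2 - 1)).card : ℤ) = ((n₀ : ℤ) - (k₀ : ℤ) - 1) * ((k₀ : ℤ) + 1) + ((q₁ : ℤ) + (q : ℤ) - (q₀ : ℤ) - 1) := by
  classical
  set N := q ^ 2 - 1 with hNdef
  have h2q : 2 ≤ q := hq.two_le
  have hq4 : 4 ≤ q * q := Nat.mul_le_mul h2q h2q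
  have hNq : N + 1 = q * q := by
    rw [hNdef, sq]; omega
  have hq₀q : q₀ + 1 ≤ q := by omega
  have hq₁q : q₁ + 1 ≤ q := by omega
  have hn₀q : n₀ + 1 ≤ q := by omega
  have hq₁q₀' : q₁ ≤ q₀ + 1 := by omega
  -- k₀ + 1 ≤ n₀
  have hkn : k₀ + 1 ≤ n₀ := by
    have h1 : (k₀ + 1) * q ≤ q₁ + n₀ * q - q₀ := by
      exact (Nat.le_div_iff_mul_le (by omega)).mp hk₀u
    have h2 : q ≤ n₀ * q := Nat.le_mul_of_pos_left q (by omega)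
    have h2' : q₀ ≤ q₁ + n₀ * q := by linarith
    have h3 : (q₁ + n₀ * q - q₀) + q₀ = q₁ + n₀ * q := Nat.sub_add_cancel h2'
    by_contra hcon
    have h4 : n₀ + 1 ≤ k₀ + 1 := by omega
    have h5 : (n₀ + 1) * q ≤ (k₀ + 1) * q := Nat.mul_le_mul_right q h4
    have e1 : (n₀ + 1) * q = n₀ * q + q := by ring
    linarith
  have hkq : k₀ + 2 ≤ q := by omega
  obtain ⟨d, hd, hd1⟩ : ∃ d, n₀ = k₀ + d ∧ 1 ≤ d := ⟨n₀ - k₀, by omega, by omega⟩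
  obtain ⟨e, he⟩ : ∃ e, d = e + 1 := ⟨d - 1, by omega⟩
  obtain ⟨c, hcdef⟩ : ∃ c, q + q₁ = q₀ + 1 + c := ⟨q + q₁ - q₀ - 1, by omega⟩
  have hck : c ≤ k₀ := by omega
  have hdq₀ : d ≤ q₀ + 2 := by omega
  have heq₀ : e ≤ q₀ + 1 := by omega
  have heq : e + k₀ + 1 = n₀ := by omega
  -- n ≤ N
  have hnN : n + 1 ≤ N + 1 := by
    have h1 : (n₀ + 1) * q ≤ q * q := Nat.mul_le_mul_right q hn₀q
    have e1 : (n₀ + 1) * q = n₀ * q + q := by ring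
    rw [hn]
    linarith
  -- value of q*i mod N for i ≤ k
  have Fval : ∀ i, i ≤ k → i / q ≤ k₀ ∧ q * i % N = i / q + i % q * q := by
    intro i hi
    have hkk : k = q * k₀ + q₀ := by rw [hk]; ring
    have hdiv : i / q ≤ k₀ := by
      have h1 : i / q ≤ k / q := Nat.div_le_div_right hi
      have h2 : k / q = k₀ := by
        rw [hkk, Nat.mul_add_div (by omega), Nat.div_eq_of_lt (by omega)]
        omega
      omega
    have hlt : i % q < q := Nat.mod_lt _ (by omega)
    have hsplit : q * (i / q) + i % q = i := Nat.div_add_mod i q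
    have h1 : q * i = i / q * (N + 1) + i % q * q := by
      conv_lhs => rw [← hsplit]
      rw [hNq]; ring
    have hval : q * i = N * (i / q) + (i / q + i % q * q) := by
      rw [h1]; ring
    have hvlt : i / q + i % q * q < N := by
      have h2 : (i % q + 1) * q ≤ q * q := Nat.mul_le_mul_right q hlt
      have e2 : (i % q + 1) * q = i % q * q + q := by ring
      linarith
    refine ⟨hdiv, ?_⟩
    rw [hval, Nat.mul_add_mod, Nat.mod_eq_of_lt hvlt]
  -- membership characterization
  have memL : ∀ m, m ∈ Lset q n k N ↔ ∃ i, i ≤ k ∧ q * i % N = m ∧ m + k + 1 < n := by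
    intro m
    simp only [Lset, Finset.mem_filter, Finset.mem_range]
    constructor
    · rintro ⟨hmN, i, hi, j, hj, hqi, hjm⟩
      have hmm : m % N = m := Nat.mod_eq_of_lt hmN
      have hjN : j < N := by omega
      have hj' : j = m := by rwa [Nat.mod_eq_of_lt hjN, hmm] at hjm
      exact ⟨i, by omega, by rwa [hmm] at hqi, by omega⟩
    · rintro ⟨i, hi, hqi, hmn⟩
      have hmN : m < N := by omega
      have hmm : m % N = m := Nat.mod_eq_of_lt hmN
      exact ⟨hmN, i, by omega, m, by omega, by rw [hmm]; exact hqi, by rw [hmm]⟩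
  set G : ℕ × ℕ → ℕ := fun p => p.1 + p.2 * q with hG
  set S : Finset (ℕ × ℕ) :=
    (Finset.range (k₀ + 1) ×ˢ Finset.range e) ∪ (Finset.range c ×ˢ {e}) with hS
  have memS : ∀ p : ℕ × ℕ, p ∈ S ↔ (p.1 ≤ k₀ ∧ p.2 < e) ∨ (p.1 < c ∧ p.2 = e) := by
    intro p
    simp only [hS, Finset.mem_union, Finset.mem_product, Finset.mem_range,
      Finset.mem_singleton, Nat.lt_succ_iff]
  -- the main set equality
  have hLS : Lset q n k N = S.image G := by
    ext m
    rw [memL m, Finset.mem_image]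
    constructor
    · rintro ⟨i, hi, hqi, hmn⟩
      obtain ⟨hdiv, hmod⟩ := Fval i hi
      obtain ⟨a, ha⟩ : ∃ a, i / q = a := ⟨_, rfl⟩
      obtain ⟨b, hb⟩ : ∃ b, i % q = b := ⟨_, rfl⟩
      rw [ha] at hdiv
      rw [ha, hb] at hmod
      have hbq : b < q := by rw [← hb]; exact Nat.mod_lt _ (by omega)
      have hsplit : q * a + b = i := by rw [← ha, ← hb]; exact Nat.div_add_mod i q
      clear ha hb
      have hmab : m = a + b * q := by rw [← hqi, hmod]
      -- inequality: a + b*q + k₀*q + q₀ + 1 < n₀*q + q₁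
      have hineq : a + b * q + k₀ * q + q₀ + 1 < n₀ * q + q₁ := by
        rw [hmab, hn, hk] at hmn; omega
      have hnsplit : n₀ * q = k₀ * q + e * q + q := by
        have : n₀ = k₀ + e + 1 := by omega
        rw [this]; ring
      -- b ≤ e
      have hble : b ≤ e := by
        by_contra hbe
        have h1 : (e + 1) * q ≤ b * q := Nat.mul_le_mul_right q (by omega)
        have e1 : (e + 1) * q = e * q + q := by ring
        omega
      rcases eq_or_lt_of_le hble with hbe | hbe
      · -- b = e : show a < c
        have hac : a < c := by
          rw [hbe] at hineq
          omega
        exact ⟨(a, b), (memS (a, b)).mpr (Or.inr ⟨hac, hbe⟩), by rw [hG]; exact hmab.symm⟩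
      · exact ⟨(a, b), (memS (a, b)).mpr (Or.inl ⟨hdiv, hbe⟩), by rw [hG]; exact hmab.symm⟩
    · rintro ⟨⟨a, b⟩, hpS, hGm⟩
      rw [memS] at hpS
      have hpS' : (a ≤ k₀ ∧ b < e) ∨ (a < c ∧ b = e) := by simpa using hpS
      clear hpS
      have hpS := hpS'
      have hGm' : a + b * q = m := hGm
      have hbq : b < q := by
        rcases hpS with ⟨_, h⟩ | ⟨_, h⟩ <;> omega
      have hak : a ≤ k₀ := by rcases hpS with ⟨h, _⟩ | ⟨h, _⟩ <;> omega
      refine ⟨q * a + b, ?_, ?_, ?_⟩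
      · -- q*a + b ≤ k
        have hkk : k = q * k₀ + q₀ := by rw [hk]; ring
        rcases hpS with ⟨h1, h2⟩ | ⟨h1, h2⟩
        · have hm1 : q * a ≤ q * k₀ := Nat.mul_le_mul_left q h1
          have hbq₀ : b ≤ q₀ := by omega
          omega
        · have hm1 : q * (a + 1) ≤ q * k₀ := Nat.mul_le_mul_left q (by omega)
          have e1 : q * (a + 1) = q * a + q := by ring
          omega
      · -- q*(q*a+b) % N = m
        have hi : q * a + b ≤ k := by
          have hkk : k = q * k₀ + q₀ := by rw [hk]; ring
          rcases hpS with ⟨h1, h2⟩ | ⟨h1, h2⟩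
          · have hm1 : q * a ≤ q * k₀ := Nat.mul_le_mul_left q h1
            have hbq₀ : b ≤ q₀ := by omega
            omega
          · have hm1 : q * (a + 1) ≤ q * k₀ := Nat.mul_le_mul_left q (by omega)
            have e1 : q * (a + 1) = q * a + q := by ring
            omega
        obtain ⟨_, hmod⟩ := Fval (q * a + b) hi
        have hdivi : (q * a + b) / q = a := by
          rw [Nat.mul_add_div (by omega), Nat.div_eq_of_lt hbq, Nat.add_zero]
        have hmodi : (q * a + b) % q = b := by
          rw [Nat.mul_add_mod, Nat.mod_eq_of_lt hbq]
        rw [hmod, hdivi, hmodi, hGm']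
      · -- m + k + 1 < n
        rw [← hGm', hn, hk]
        have hnsplit : n₀ * q = k₀ * q + e * q + q := by
          have : n₀ = k₀ + e + 1 := by omega
          rw [this]; ring
        rcases hpS with ⟨h1, h2⟩ | ⟨h1, h2⟩
        · have hm1 : (b + 1) * q ≤ e * q := Nat.mul_le_mul_right q (by omega)
          have e1 : (b + 1) * q = b * q + q := by ring
          have : a + b * q + q₀ + 1 < e * q + q + q₁ := by omega
          omega
        · subst h2
          have : a + q₀ + 1 < q + q₁ := by omega
          omega
  -- injectivity
  have hinj : Set.InjOn G ↑S := by
    rintro ⟨a, b⟩ hp ⟨a', b'⟩ hp' hEq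
    rw [Finset.mem_coe, memS] at hp hp'
    have ha : a < q := by rcases hp with ⟨h, _⟩ | ⟨h, _⟩ <;> omega
    have ha' : a' < q := by rcases hp' with ⟨h, _⟩ | ⟨h, _⟩ <;> omega
    have hEq' : a + b * q = a' + b' * q := hEq
    have h1 : (a + b * q) % q = a := by
      rw [Nat.add_mul_mod_self_right, Nat.mod_eq_of_lt ha]
    have h1' : (a' + b' * q) % q = a' := by
      rw [Nat.add_mul_mod_self_right, Nat.mod_eq_of_lt ha']
    have h2 : (a + b * q) / q = b := by
      rw [Nat.add_mul_div_right _ _ (by omega : 0 < q), Nat.div_eq_of_lt ha, Nat.zero_add]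
    have h2' : (a' + b' * q) / q = b' := by
      rw [Nat.add_mul_div_right _ _ (by omega : 0 < q), Nat.div_eq_of_lt ha', Nat.zero_add]
    have : a = a' := by rw [← h1, ← h1', hEq']
    have : b = b' := by rw [← h2, ← h2', hEq']
    simp_all
  have hdisj : Disjoint (Finset.range (k₀ + 1) ×ˢ Finset.range e)
      ((Finset.range c ×ˢ {e}) : Finset (ℕ × ℕ)) := by
    rw [Finset.disjoint_left]
    rintro ⟨a, b⟩ h1 h2
    simp only [Finset.mem_product, Finset.mem_range, Finset.mem_singleton] at h1 h2
    omega
  have hcard : S.card = (k₀ + 1) * e + c := by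
    rw [hS, Finset.card_union_of_disjoint hdisj, Finset.card_product, Finset.card_product,
      Finset.card_range, Finset.card_range, Finset.card_range, Finset.card_singleton, mul_one]
  rw [hLS, Finset.card_image_of_injOn hinj, hcard]
  have heZ : (e : ℤ) = (n₀ : ℤ) - k₀ - 1 := by omega
  have hcZ : (c : ℤ) = (q₁ : ℤ) + q - q₀ - 1 := by omega
  push_cast
  rw [heZ, hcZ]
  ring
end
end

section
/- Let q be a prime power and let n,k be integers with 0 ≤ k ≤ n−2. Let N be a positive divisor of q²−1 with N > n−k−2. Then L(q²−1) ⊆ L(N), and consequently |L(N)| ≥ |L(q²−1)|. -/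
noncomputable section

/-- If `N` is a positive divisor of `q²−1` with `N > n−k−2`,
then `L(q²−1) ⊆ L(N)`, and consequently `|L(N)| ≥ |L(q²−1)|`. -/
theorem Lset_subset_of_dvd
    {q n k N : ℕ} (hq : IsPrimePow q) (hk : k + 2 ≤ n)
    (hNpos : 0 < N) (hdvd : N ∣ q ^ 2 - 1) (hNgt : n - k - 2 < N) :
    Lset q n k (q ^ 2 - 1) ⊆ Lset q n k N
      ∧ (Lset q n k (q ^ 2 - 1)).card ≤ (Lset q n k N).card := by
  have hq2 : 2 ≤ q := hq.two_le
  have h4 : 4 ≤ q ^ 2 := by nlinarith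
  have hM : 0 < q ^ 2 - 1 := by omega
  have hNle : N ≤ q ^ 2 - 1 := Nat.le_of_dvd hM hdvd
  have hsub : Lset q n k (q ^ 2 - 1) ⊆ Lset q n k N := by
    intro m hm
    simp only [Lset, Finset.mem_filter, Finset.mem_range] at hm ⊢
    obtain ⟨hmlt, i, hi, j, hj, h1, h2⟩ := hm
    have hjN : j < N := by omega
    have hjlt : j < q ^ 2 - 1 := lt_of_lt_of_le hjN hNle
    have hmj : m = j := by
      rw [Nat.mod_eq_of_lt hjlt, Nat.mod_eq_of_lt hmlt] at h2; omega
    refine ⟨by omega, i, hi, j, hj, ?_, ?_⟩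
    · exact Nat.ModEq.of_dvd hdvd (h1 : (q * i) ≡ m [MOD q ^ 2 - 1])
    · rw [hmj]
  exact ⟨hsub, Finset.card_le_card hsub⟩

end
end

section
/- Let q be a prime power and let n ≥ 2 be an integer such that (n−1) divides (q²−1). Let U = {α ∈ 𝔽_{q²} : α^{n−1} = 1} ∪ {0}. Then |U| = n and for every a ∈ U there exists β ∈ 𝔽_{q²} such that ∏_{b ∈ U, b ≠ a}(a−b) = β^{q+1}; indeed this product equals n−1 when a^{n−1} = 1 and equals −1 when a = 0, and every element of the subfield 𝔽_q is a (q+1)-st power in 𝔽_{q²}. -/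
/-!
`U` consists of `0` and the `(n-1)`-th roots of unity, all of which lie in `𝔽_{q²}` because
`𝔽_{q²}ˣ` is cyclic of order `q² - 1`. Differentiating `X^(n-1) - 1 = ∏_ζ (X - ζ)` at a root `a`
gives `∏_{ζ ≠ a} (a - ζ) = (n-1) a^(n-2)`, so the product over `U \ {a}` is `n - 1`; at `0` it is
`0^(n-1) - 1 = -1`. Integers are fixed by `x ↦ x^q`, and a nonzero `x` with `x^(q-1) = 1` is a
`(q+1)`-st power because `𝔽_{q²}ˣ` is cyclic of order `(q+1)(q-1)`.
-/

open Polynomial Finset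

theorem IsCyclic.exists_pow_eq_of_pow_eq_one {G : Type*} [Group G] [IsCyclic G] [Finite G]
    {d e : ℕ} (hG : Nat.card G = d * e) {x : G} (hx : x ^ e = 1) : ∃ y : G, y ^ d = x := by
  obtain ⟨g, hg⟩ := IsCyclic.exists_monoid_generator (α := G)
  obtain ⟨k, rfl⟩ := hg x
  have he : e ≠ 0 := by
    rintro rfl
    simp [Nat.card_pos.ne'] at hG
  have : d * e ∣ k * e := by
    rw [← hG, ← orderOf_eq_card_of_forall_mem_powers hg, orderOf_dvd_iff_pow_eq_one, pow_mul, hx]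
  obtain ⟨t, rfl⟩ := (Nat.mul_dvd_mul_iff_right (Nat.pos_of_ne_zero he)).mp this
  exact ⟨g ^ t, by rw [← pow_mul, mul_comm]⟩

theorem FiniteField.exists_pow_add_one_eq_of_pow_eq_self {F : Type*} [Field F] [Fintype F]
    {q : ℕ} (hF : Fintype.card F = q ^ 2) {x : F} (hx : x ^ q = x) : ∃ β : F, x = β ^ (q + 1) := by
  rcases eq_or_ne x 0 with rfl | hx0
  · exact ⟨0, (zero_pow q.succ_ne_zero).symm⟩
  have hq : q ≠ 0 := by
    rintro rfl
    simp at hF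
  have hcard : Nat.card Fˣ = (q + 1) * (q - 1) := by
    rw [Nat.card_units, Nat.card_eq_fintype_card, hF, ← Nat.sq_sub_sq, one_pow]
  have hx1 : (Units.mk0 x hx0) ^ (q - 1) = 1 := by
    ext
    rw [Units.val_pow_eq_pow_val, Units.val_mk0, Units.val_one, ← mul_left_inj' hx0, ← pow_succ,
      Nat.sub_add_cancel (Nat.one_le_iff_ne_zero.mpr hq), hx, one_mul]
  obtain ⟨y, hy⟩ := IsCyclic.exists_pow_eq_of_pow_eq_one hcard hx1
  exact ⟨y, by rw [← Units.val_pow_eq_pow_val, hy, Units.val_mk0]⟩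

theorem intCast_pow_eq_self_of_card_eq_pow {F : Type*} [Field F] [Fintype F] {q k : ℕ}
    (hq : IsPrimePow q) (hF : Fintype.card F = q ^ k) (z : ℤ) : (z : F) ^ q = z := by
  obtain ⟨p, v, hp, -, rfl⟩ := hq
  have : Fact p.Prime := ⟨hp.nat_prime⟩
  have : CharP F p := charP_of_card_eq_prime_pow (f := v * k) (by rw [hF, pow_mul])
  rw [← iterateFrobenius_def, map_intCast]

theorem FiniteField.exists_isPrimitiveRoot_of_dvd {F : Type*} [Field F] [Fintype F] {m : ℕ}
    (hm : m ∣ Fintype.card F - 1) : ∃ ζ : F, IsPrimitiveRoot ζ m := by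
  obtain ⟨g, hg⟩ := IsCyclic.exists_ofOrder_eq_natCard (α := Fˣ)
  rw [Nat.card_units, Nat.card_eq_fintype_card] at hg
  have hord := orderOf_pow_orderOf_div (orderOf_pos g).ne' (hg ▸ hm)
  rw [hg] at hord
  exact ⟨_, IsPrimitiveRoot.coe_units_iff.mpr (hord ▸ IsPrimitiveRoot.orderOf _)⟩

theorem Polynomial.zero_notMem_nthRootsFinset_one {R : Type*} [CommRing R] [IsDomain R] {m : ℕ} :
    (0 : R) ∉ nthRootsFinset m (1 : R) :=
  (ne_zero_of_mem_nthRootsFinset one_ne_zero · rfl)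

namespace IsPrimitiveRoot

variable {R : Type*} [CommRing R] [IsDomain R] [DecidableEq R] {ζ : R} {m : ℕ}

theorem prod_nthRootsFinset_erase_sub (hζ : IsPrimitiveRoot ζ m) (hm : 0 < m) {a : R}
    (ha : a ∈ nthRootsFinset m (1 : R)) :
    ∏ b ∈ (nthRootsFinset m (1 : R)).erase a, (a - b) = m * a ^ (m - 1) := by
  have h := congrArg (fun f => eval a (derivative f)) (X_pow_sub_one_eq_prod hm hζ)
  simp only [prod_eq_multiset_prod, eval_multiset_prod_X_sub_C_derivative ha] at h
  simpa [erase_val, prod_eq_multiset_prod, derivative_X_pow] using h.symm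

theorem card_insert_zero_nthRootsFinset (hζ : IsPrimitiveRoot ζ m) :
    #(insert 0 (nthRootsFinset m (1 : R))) = m + 1 := by
  rw [card_insert_of_notMem zero_notMem_nthRootsFinset_one, hζ.card_nthRootsFinset]

theorem prod_insert_zero_erase_sub (hζ : IsPrimitiveRoot ζ m) (hm : 0 < m) {a : R}
    (ha : a ∈ nthRootsFinset m (1 : R)) :
    ∏ b ∈ (insert 0 (nthRootsFinset m (1 : R))).erase a, (a - b) = m := by
  have ha0 : a ≠ 0 := ne_zero_of_mem_nthRootsFinset one_ne_zero ha
  rw [erase_insert_of_ne ha0.symm,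
    prod_insert fun h => zero_notMem_nthRootsFinset_one (mem_of_mem_erase h),
    hζ.prod_nthRootsFinset_erase_sub hm ha, sub_zero]
  calc a * (m * a ^ (m - 1)) = m * a ^ m := by
        rw [mul_left_comm, ← pow_succ', Nat.sub_add_cancel hm]
    _ = m := by rw [(Polynomial.mem_nthRootsFinset hm 1).mp ha, mul_one]

theorem prod_insert_zero_erase_zero_sub (hζ : IsPrimitiveRoot ζ m) (hm : 0 < m) :
    ∏ b ∈ (insert 0 (nthRootsFinset m (1 : R))).erase 0, (0 - b) = -1 := by
  rw [erase_insert zero_notMem_nthRootsFinset_one]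
  simpa [zero_pow hm.ne'] using (hζ.pow_sub_pow_eq_prod_sub_mul 0 1 hm).symm

end IsPrimitiveRoot

theorem filter_pow_eq_one_union_zero_eq_insert {R : Type*} [CommRing R] [IsDomain R] [Fintype R]
    [DecidableEq R] {m : ℕ} (hm : 0 < m) :
    (univ.filter fun α : R => α ^ m = 1) ∪ {0} = insert 0 (nthRootsFinset m (1 : R)) := by
  ext x
  simp [Polynomial.mem_nthRootsFinset hm]

/-- Let `(n−1) ∣ (q²−1)` and
`U = {α ∈ 𝔽_{q²} : α^{n−1} = 1} ∪ {0}`.  Then `|U| = n`; for every `a ∈ U` the product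
`∏_{b ∈ U, b ≠ a} (a−b)` is a `(q+1)`-st power in `𝔽_{q²}`; this product equals `n−1`
when `a^{n−1} = 1` and equals `−1` when `a = 0`; and every element of the subfield
`𝔽_q` (i.e. every `x` with `x^q = x`) is a `(q+1)`-st power in `𝔽_{q²}`. -/
theorem evaluationSet_card_and_products_are_powers
    {q n : ℕ} (hq : IsPrimePow q) {F : Type*} [Field F] [Fintype F] [DecidableEq F]
    (hF : Fintype.card F = q ^ 2) (hn : 2 ≤ n) (hdvd : (n - 1) ∣ (q ^ 2 - 1)) :
    (((Finset.univ.filter fun α : F => α ^ (n - 1) = 1) ∪ {0}).card = n)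
    ∧ (∀ a ∈ (Finset.univ.filter fun α : F => α ^ (n - 1) = 1) ∪ {0}, ∃ β : F,
        ∏ b ∈ ((Finset.univ.filter fun α : F => α ^ (n - 1) = 1) ∪ {0}).erase a, (a - b)
          = β ^ (q + 1))
    ∧ (∀ a ∈ (Finset.univ.filter fun α : F => α ^ (n - 1) = 1) ∪ {0}, a ^ (n - 1) = 1 →
        ∏ b ∈ ((Finset.univ.filter fun α : F => α ^ (n - 1) = 1) ∪ {0}).erase a, (a - b)
          = ((n - 1 : ℕ) : F))
    ∧ (∏ b ∈ ((Finset.univ.filter fun α : F => α ^ (n - 1) = 1) ∪ {0}).erase 0,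
          ((0 : F) - b) = -1)
    ∧ (∀ x : F, x ^ q = x → ∃ β : F, x = β ^ (q + 1)) := by
  have hm : 0 < n - 1 := by omega
  obtain ⟨ζ, hζ⟩ := FiniteField.exists_isPrimitiveRoot_of_dvd (F := F) (m := n - 1) (hF ▸ hdvd)
  have hnorm : ∀ x : F, x ^ q = x → ∃ β : F, x = β ^ (q + 1) :=
    fun x => FiniteField.exists_pow_add_one_eq_of_pow_eq_self hF
  have hint : ∀ z : ℤ, ∃ β : F, (z : F) = β ^ (q + 1) :=
    fun z => hnorm _ (intCast_pow_eq_self_of_card_eq_pow hq hF z)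
  rw [filter_pow_eq_one_union_zero_eq_insert hm]
  refine ⟨by rw [hζ.card_insert_zero_nthRootsFinset]; omega, fun a ha => ?_,
    fun a _ ha => hζ.prod_insert_zero_erase_sub hm ((Polynomial.mem_nthRootsFinset hm 1).mpr ha),
    hζ.prod_insert_zero_erase_zero_sub hm, hnorm⟩
  rcases mem_insert.mp ha with rfl | ha
  · rw [hζ.prod_insert_zero_erase_zero_sub hm]
    exact_mod_cast hint (-1)
  · rw [hζ.prod_insert_zero_erase_sub hm ha]
    exact_mod_cast hint (n - 1 : ℕ)
end

section
/- Let q be a prime power and let n ≠ q² be an integer such that (n−1) divides (q²−1). Write n = n₀q+q₁ with 1 ≤ n₀ ≤ q−1 and 0 ≤ q₁ ≤ q−1, and let k = k₀q+q₀ with 1 ≤ k₀ < ⌊(q₁+n₀q−q₀)/q⌋, 0 ≤ q₀ ≤ q−1, and q₁−q₀ ≤ 1. Then there exists an [n, k+1, n−k]_{q²} MDS linear code C with dim Hull_H(C) ≥ ℓ, where ℓ is the quantity defined from (q,n₀,q₁,k₀,q₀) by the four-case formula. -/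
noncomputable section

/-- The Hamming weight of a word. -/
def wt {F : Type*} [Field F] {n : ℕ} (c : Fin n → F) : ℕ := Set.ncard {i | c i ≠ 0}
/-- The four-case formula for the designed Hermitian hull dimension. -/
def ellF (q n₀ q₁ k₀ q₀ : ℕ) : ℤ :=
  if (k₀ : ℤ) ≤ (q₁ : ℤ) + q - q₀ - 2 then
    if (q₀ : ℤ) ≤ (n₀ : ℤ) - k₀ - 2 then (k₀ : ℤ) * ((n₀ : ℤ) - k₀) + q₀ + 1
    else ((k₀ : ℤ) + 1) * ((n₀ : ℤ) - k₀)
  else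
    if (q₀ : ℤ) < (n₀ : ℤ) - k₀ - 2 then (k₀ : ℤ) * ((n₀ : ℤ) - k₀ - 1) + q₁ + q
    else ((n₀ : ℤ) - k₀ - 1) * ((k₀ : ℤ) + 1) + ((q₁ : ℤ) + q - q₀ - 1)

/-!
Take the generalized Reed–Solomon code of dimension `k + 1` on the evaluation set
`{0} ∪ μₙ₋₁ ⊆ 𝔽_{q²}`, with column multiplier `1` on the roots of unity and `v₀` with
`v₀ ^ (q + 1) = -(n - 1)` at `0`; it is MDS. The Hermitian product of the codewords of `X ^ s`
and `X ^ j` is the power sum `∑ vᵢ ^ (q + 1) aᵢ ^ (s + q j)`, which vanishes unless `n - 1`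
divides a nonzero `s + q j`. For `s = c q + e` with `c ≤ k₀`, `e < n₀ - k₀` this never happens,
because `q (s + q j) ≡ c + j + e q` modulo `q² - 1` and the digit constraints (together with
`n₀ < q₁`, forced by `n - 1 ∣ q² - 1`) keep `c + j + e q < n - 1`. These `(k₀ + 1)(n₀ - k₀)`
codewords are independent and lie in the hull, and under the hypotheses `ℓ` is exactly
`(k₀ + 1)(n₀ - k₀)`.
-/

open Finset Polynomial

section FiniteField

variable {F : Type*} [Field F] [Fintype F]

theorem exists_isPrimitiveRoot_of_dvd_card_sub_one {m : ℕ} (hm : m ∣ Fintype.card F - 1) :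
    ∃ ζ : F, IsPrimitiveRoot ζ m := by
  classical
  have hm0 : 0 < m := Nat.pos_of_dvd_of_pos hm (by have := Fintype.one_lt_card (α := F); omega)
  rw [← Fintype.card_units] at hm
  obtain ⟨ζ, hζ⟩ : ({ζ : Fˣ | orderOf ζ = m} : Finset Fˣ).Nonempty := by
    rw [← card_pos, IsCyclic.card_orderOf_eq_totient hm]
    exact Nat.totient_pos.2 hm0
  exact ⟨ζ, IsPrimitiveRoot.coe_units_iff.2 ((mem_filter.1 hζ).2 ▸ IsPrimitiveRoot.orderOf ζ)⟩

theorem natCast_ne_zero_of_dvd_card_sub_one {m : ℕ} (hm : m ∣ Fintype.card F - 1) :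
    (m : F) ≠ 0 := by
  obtain ⟨t, ht⟩ := hm
  intro h0
  have := congrArg (Nat.cast : ℕ → F) ht
  rw [Nat.cast_sub Fintype.card_pos, FiniteField.cast_card_eq_zero, Nat.cast_mul, h0] at this
  simp at this

theorem exists_pow_succ_eq_of_pow_eq_self {q : ℕ} (hF : Fintype.card F = q ^ 2) {c : F}
    (hc : c ≠ 0) (hcq : c ^ q = c) : ∃ v : F, v ^ (q + 1) = c := by
  have hq : 2 ≤ q := by
    have := hF ▸ Fintype.one_lt_card (α := F)
    nlinarith
  classical
  obtain ⟨g, hg⟩ := IsCyclic.exists_generator (α := Fˣ)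
  have hg_ord : orderOf g = (q + 1) * (q - 1) := by
    rw [orderOf_eq_card_of_forall_mem_zpowers hg, Nat.card_eq_fintype_card, Fintype.card_units,
      hF]
    zify [Nat.one_le_pow 2 q (by omega), (by omega : 1 ≤ q)]
    ring
  obtain ⟨t, ht⟩ : ∃ t : ℕ, g ^ t = Units.mk0 c hc :=
    mem_powers_iff_mem_zpowers.2 (hg _)
  have hc1 : (Units.mk0 c hc) ^ (q - 1) = 1 := by
    ext
    refine mul_right_cancel₀ hc ?_
    rw [Units.val_pow_eq_pow_val, Units.val_mk0, Units.val_one, ← pow_succ,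
      Nat.sub_add_cancel (by omega), hcq, one_mul]
  obtain ⟨s, rfl⟩ : q + 1 ∣ t := by
    refine Nat.dvd_of_mul_dvd_mul_right (by omega : 0 < q - 1) ?_
    rw [← hg_ord]
    exact orderOf_dvd_of_pow_eq_one (by rw [pow_mul, ht, hc1])
  refine ⟨(g ^ s : Fˣ), ?_⟩
  rw [← Units.val_pow_eq_pow_val, ← pow_mul, mul_comm, ht, Units.val_mk0]

end FiniteField

section GeneralizedReedSolomon

variable {F : Type*} [Field F] {n : ℕ}

theorem wt_eq_sub_card_filter_eq_zero [DecidableEq F] (c : Fin n → F) :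
    wt c = n - #{i | c i = 0} := by
  have h := card_filter_add_card_filter_not (s := univ) (fun i => c i = 0)
  rw [card_univ, Fintype.card_fin] at h
  have hne : {i | c i ≠ 0}.toFinset = ({i | ¬c i = 0} : Finset (Fin n)) := by ext; simp
  rw [wt, Set.ncard_eq_toFinset_card', hne]
  omega

@[simps]
def grsMap (a v : Fin n → F) : F[X] →ₗ[F] Fin n → F where
  toFun f i := v i * f.eval (a i)
  map_add' f g := by ext i; simp [mul_add]
  map_smul' c f := by ext i; simp [mul_left_comm]

/-- The generalized Reed–Solomon code `GRS_k(a, v)`. -/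
def grsCode (a v : Fin n → F) (k : ℕ) : Submodule F (Fin n → F) :=
  (degreeLT F k).map (grsMap a v)

variable {a v : Fin n → F} {k : ℕ}

theorem card_filter_grsMap_eq_zero_lt [DecidableEq F] (ha : Function.Injective a)
    (hv : ∀ i, v i ≠ 0) {f : F[X]} (hf : f ∈ degreeLT F k) (hf0 : f ≠ 0) :
    #{i | grsMap a v f i = 0} < k := by
  by_contra! h
  refine hf0 (eq_zero_of_degree_lt_of_eval_index_eq_zero _ ha.injOn
    ((mem_degreeLT.1 hf).trans_le (by exact_mod_cast h)) fun i hi => ?_)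
  simpa [hv i] using (mem_filter.1 hi).2

theorem disjoint_degreeLT_ker_grsMap (ha : Function.Injective a) (hv : ∀ i, v i ≠ 0)
    (hk : k ≤ n) : Disjoint (degreeLT F k) (LinearMap.ker (grsMap a v)) := by
  classical
  refine Submodule.disjoint_def.2 fun f hf hker => by_contra fun hf0 => ?_
  have := card_filter_grsMap_eq_zero_lt ha hv hf hf0
  rw [filter_true_of_mem (p := fun i => grsMap a v f i = 0)
    fun i _ => congrFun (LinearMap.mem_ker.1 hker) i, card_univ, Fintype.card_fin] at this
  omega

theorem finrank_grsCode (ha : Function.Injective a) (hv : ∀ i, v i ≠ 0) (hk : k ≤ n) :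
    Module.finrank F (grsCode a v k) = k := by
  have hinj : Function.Injective ((grsMap a v).domRestrict (degreeLT F k)) :=
    LinearMap.injective_domRestrict_iff.2 (disjoint_degreeLT_ker_grsMap ha hv hk)
  rw [grsCode, ← LinearMap.range_domRestrict, LinearMap.finrank_range_of_inj hinj,
    (degreeLTEquiv F k).finrank_eq, Module.finrank_fin_fun]

theorem sub_le_wt_of_mem_grsCode (ha : Function.Injective a) (hv : ∀ i, v i ≠ 0)
    {c : Fin n → F} (hc : c ∈ grsCode a v (k + 1)) (hc0 : c ≠ 0) : n - k ≤ wt c := by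
  classical
  obtain ⟨f, hf, rfl⟩ := hc
  have hf0 : f ≠ 0 := by rintro rfl; exact hc0 (map_zero _)
  have := card_filter_grsMap_eq_zero_lt ha hv hf hf0
  rw [wt_eq_sub_card_filter_eq_zero]
  omega

/-- The codeword of `∏_{i ∈ S} (X - a i)` vanishes exactly on `S`. -/
theorem exists_mem_grsCode_wt_eq (ha : Function.Injective a) (hv : ∀ i, v i ≠ 0) (hk : k < n) :
    ∃ c ∈ grsCode a v (k + 1), c ≠ 0 ∧ wt c = n - k := by
  classical
  obtain ⟨S, -, hS⟩ := exists_subset_card_eq (s := (univ : Finset (Fin n)))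
    (by simpa using hk.le)
  have hzero : ∀ i, grsMap a v (∏ j ∈ S, (X - C (a j))) i = 0 ↔ i ∈ S := by
    intro i
    simp [hv i, eval_prod, prod_eq_zero_iff, sub_eq_zero, ha.eq_iff]
  have hfilter : ({i | grsMap a v (∏ j ∈ S, (X - C (a j))) i = 0} : Finset (Fin n)) = S := by
    ext i
    simp only [mem_filter, mem_univ, true_and, hzero]
  obtain ⟨i, hi⟩ : ∃ i, i ∉ S := by
    by_contra! h
    have := card_le_card (fun i _ => h i : (univ : Finset (Fin n)) ⊆ S)
    simp at this
    omega
  refine ⟨grsMap a v (∏ j ∈ S, (X - C (a j))), Submodule.mem_map_of_mem ?_, fun h0 => ?_, ?_⟩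
  · rw [mem_degreeLT, degree_eq_natDegree (monic_prod_of_monic _ _ fun i _ =>
      monic_X_sub_C (a i)).ne_zero, natDegree_finsetProd_X_sub_C_eq_card, hS]
    exact_mod_cast k.lt_succ_self
  · exact hi ((hzero i).1 (congrFun h0 i))
  · rw [wt_eq_sub_card_filter_eq_zero, hfilter, hS]

theorem grsMap_X_pow_mem_hdual {p e s : ℕ} [ExpChar F p]
    (h : ∀ j < k, ∑ i, v i ^ (p ^ e + 1) * a i ^ (s + p ^ e * j) = 0) :
    grsMap a v (X ^ s) ∈ hdual (p ^ e) (grsCode a v k) := by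
  rintro _ ⟨f, hf, rfl⟩
  set u := degreeLTEquiv F k ⟨f, hf⟩
  calc ∑ i, grsMap a v (X ^ s) i * grsMap a v f i ^ p ^ e
      = ∑ i, ∑ j : Fin k, u j ^ p ^ e * (v i ^ (p ^ e + 1) * a i ^ (s + p ^ e * j)) := by
        refine sum_congr rfl fun i _ => ?_
        rw [grsMap_apply, grsMap_apply, eval_eq_sum_degreeLTEquiv hf, mul_pow, sum_pow_char_pow,
          mul_sum, mul_sum]
        refine sum_congr rfl fun j _ => ?_
        simp only [eval_X_pow]
        ring
    _ = ∑ j : Fin k, u j ^ p ^ e * ∑ i, v i ^ (p ^ e + 1) * a i ^ (s + p ^ e * j) := by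
        rw [sum_comm]
        simp only [mul_sum]
    _ = 0 := sum_eq_zero fun j _ => by rw [h j j.2, mul_zero]

theorem card_le_finrank_grsCode_inf_hdual {p e : ℕ} [ExpChar F p] (ha : Function.Injective a)
    (hv : ∀ i, v i ≠ 0) (hk : k ≤ n) (S : Finset ℕ) (hS : ∀ s ∈ S, s < k)
    (hSv : ∀ s ∈ S, ∀ j < k, ∑ i, v i ^ (p ^ e + 1) * a i ^ (s + p ^ e * j) = 0) :
    #S ≤ Module.finrank F ↥(grsCode a v k ⊓ hdual (p ^ e) (grsCode a v k)) := by
  set w : S → F[X] := fun s => X ^ (s : ℕ)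
  have hw : LinearIndependent F w := by
    simpa [w, Function.comp_def, monomial_one_right_eq_X_pow] using
      (basisMonomials F).linearIndependent.comp _ Subtype.val_injective
  have hw_le : Submodule.span F (Set.range w) ≤ degreeLT F k := by
    rw [Submodule.span_le]
    rintro _ ⟨s, rfl⟩
    exact mem_degreeLT.2 ((degree_X_pow_le _).trans_lt (by exact_mod_cast hS s s.2))
  have hind := hw.map ((disjoint_degreeLT_ker_grsMap ha hv hk).mono_left hw_le)
  calc #S = Module.finrank F (Submodule.span F (Set.range (grsMap a v ∘ w))) := by
        rw [finrank_span_eq_card hind, Fintype.card_coe]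
    _ ≤ _ := Submodule.finrank_mono <| Submodule.span_le.2 <| by
        rintro _ ⟨s, rfl⟩
        exact ⟨Submodule.mem_map_of_mem (hw_le (Submodule.subset_span ⟨s, rfl⟩)),
          grsMap_X_pow_mem_hdual (hSv s s.2)⟩

end GeneralizedReedSolomon

section RootsOfUnity

variable {F : Type*} [Field F] {ζ : F} {m : ℕ}

def zeroConsPowers (ζ : F) (m : ℕ) : Fin (m + 1) → F := Fin.cons 0 fun t => ζ ^ (t : ℕ)

theorem zeroConsPowers_injective (hζ : IsPrimitiveRoot ζ m) :
    Function.Injective (zeroConsPowers ζ m) := by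
  refine Fin.cons_injective_iff.2 ⟨?_, fun t t' h => Fin.ext (hζ.pow_inj t.2 t'.2 h)⟩
  rintro ⟨t, ht⟩
  exact pow_ne_zero _ (hζ.ne_zero (by have := t.2; omega)) ht

/-- At exponent `0` the `m` roots of unity contribute `m`, which the weight `v₀ ^ r = -m` of the
point `0` cancels. -/
theorem sum_cons_pow_mul_zeroConsPowers_pow (hζ : IsPrimitiveRoot ζ m) {v₀ : F} {r M : ℕ}
    (hv₀ : v₀ ^ r = -m) (hM : M = 0 ∨ ¬ m ∣ M) :
    ∑ i, (Fin.cons v₀ 1 : Fin (m + 1) → F) i ^ r * zeroConsPowers ζ m i ^ M = 0 := by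
  rw [Fin.sum_univ_succ]
  simp only [zeroConsPowers, Fin.cons_zero, Fin.cons_succ, Pi.one_apply, one_pow, one_mul,
    pow_right_comm ζ _ M]
  rw [Fin.sum_univ_eq_sum_range (fun t => (ζ ^ M) ^ t)]
  rcases hM with rfl | hM
  · simp [hv₀]
  · have hM0 : M ≠ 0 := by rintro rfl; exact hM (dvd_zero m)
    have hζM : ζ ^ M ≠ 1 := fun h => hM ((hζ.pow_eq_one_iff_dvd M).1 h)
    rw [zero_pow hM0, mul_zero, zero_add, geom_sum_eq hζM, ← pow_mul, mul_comm, pow_mul,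
      hζ.pow_eq_one, one_pow, sub_self, zero_div]

end RootsOfUnity

theorem exists_mds_code_card_le_finrank_hermitianHull {F : Type*} [Field F] [Fintype F]
    {p e m k : ℕ} (hp : p.Prime) (hF : Fintype.card F = (p ^ e) ^ 2) (hm : m ∣ (p ^ e) ^ 2 - 1) (hk : k ≤ m)
    (S : Finset ℕ) (hS : ∀ s ∈ S, s ≤ k)
    (hSm : ∀ s ∈ S, ∀ j ≤ k, s + p ^ e * j = 0 ∨ ¬ m ∣ s + p ^ e * j) :
    ∃ C : Submodule F (Fin (m + 1) → F),
      Module.finrank F C = k + 1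
      ∧ (∀ c ∈ C, c ≠ 0 → m + 1 - k ≤ wt c)
      ∧ (∃ c ∈ C, c ≠ 0 ∧ wt c = m + 1 - k)
      ∧ #S ≤ Module.finrank F ↥(C ⊓ hdual (p ^ e) C) := by
  have := Fact.mk hp
  have : CharP F p := charP_of_card_eq_prime_pow (hF.trans (pow_mul p e 2).symm)
  rw [← hF] at hm
  obtain ⟨ζ, hζ⟩ := exists_isPrimitiveRoot_of_dvd_card_sub_one hm
  have hm0 : -(m : F) ≠ 0 := neg_ne_zero.2 (natCast_ne_zero_of_dvd_card_sub_one hm)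
  obtain ⟨v₀, hv₀⟩ := exists_pow_succ_eq_of_pow_eq_self hF hm0 (by
    rw [← iterateFrobenius_def, map_neg, map_natCast])
  have hv : ∀ i, (Fin.cons v₀ 1 : Fin (m + 1) → F) i ≠ 0 :=
    Fin.cases (show v₀ ≠ 0 by rintro rfl; exact hm0 (hv₀ ▸ zero_pow (Nat.succ_ne_zero _)))
      fun _ => one_ne_zero
  have ha := zeroConsPowers_injective hζ
  refine ⟨grsCode (zeroConsPowers ζ m) (Fin.cons v₀ 1) (k + 1), finrank_grsCode ha hv (by omega),
    fun c hc hc0 => sub_le_wt_of_mem_grsCode ha hv hc hc0,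
    exists_mem_grsCode_wt_eq ha hv (by omega),
    card_le_finrank_grsCode_inf_hdual ha hv (by omega) S (fun s hs => Nat.lt_succ_of_le (hS s hs))
      fun s hs j hj => sum_cons_pow_mul_zeroConsPowers_pow hζ hv₀ (hSm s hs j (by omega))⟩

theorem eq_zero_or_not_dvd_mul_add {q m x y : ℕ} (hq : 1 ≤ q) (hm : m ∣ q ^ 2 - 1)
    (hlt : x + y * q < m) : x * q + y = 0 ∨ ¬ m ∣ x * q + y := by
  rw [or_iff_not_imp_right, not_not]
  intro hdvd
  -- `q (x q + y) ≡ x + y q` modulo `q² - 1`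
  have hid : x * (q ^ 2 - 1) + (x + y * q) = q * (x * q + y) := by
    zify [Nat.one_le_pow 2 q hq]
    ring
  have hdvd' : m ∣ x + y * q :=
    (Nat.dvd_add_right (hm.mul_left x)).1 (hid ▸ hdvd.mul_left q)
  obtain ⟨rfl, hyq⟩ := Nat.add_eq_zero_iff.1 (Nat.eq_zero_of_dvd_of_lt hdvd' hlt)
  obtain rfl : y = 0 := by simpa [show q ≠ 0 by omega] using hyq
  simp

def hullExponents (q k₀ d : ℕ) : Finset ℕ :=
  (range (k₀ + 1) ×ˢ range d).image fun ce => ce.1 * q + ce.2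

theorem card_hullExponents {q k₀ d : ℕ} (hd : d ≤ q) :
    #(hullExponents q k₀ d) = (k₀ + 1) * d := by
  rw [hullExponents, card_image_of_injOn, card_product, card_range, card_range]
  rintro ⟨c, e⟩ hce ⟨c', e'⟩ hce' h
  simp only [coe_product, coe_range, Set.mem_prod, Set.mem_Iio] at hce hce'
  dsimp only at h
  have hq : 0 < q := by omega
  have he : e = e' := by
    simpa [Nat.mul_add_mod_of_lt (a := c) (by omega : e < q),
      Nat.mul_add_mod_of_lt (a := c') (by omega : e' < q)] using congrArg (· % q) h
  subst he
  obtain rfl : c = c' := Nat.eq_of_mul_eq_mul_right hq (by omega)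
  rfl

theorem le_of_mem_hullExponents {q k₀ d q₀ s : ℕ} (hs : s ∈ hullExponents q k₀ d)
    (hd : d ≤ q₀ + 1) : s ≤ k₀ * q + q₀ := by
  obtain ⟨⟨c, e⟩, hce, rfl⟩ := mem_image.1 hs
  simp only [mem_product, mem_range] at hce
  have := Nat.mul_le_mul_right q (Nat.le_of_lt_succ hce.1)
  dsimp only
  omega

theorem eq_zero_or_not_dvd_of_mem_hullExponents {q m k₀ d j s : ℕ} (hq : 1 ≤ q)
    (hm : m ∣ q ^ 2 - 1) (hs : s ∈ hullExponents q k₀ d) (hlt : k₀ + j + d * q < m + q) :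
    s + q * j = 0 ∨ ¬ m ∣ s + q * j := by
  obtain ⟨⟨c, e⟩, hce, rfl⟩ := mem_image.1 hs
  simp only [mem_product, mem_range] at hce
  have := Nat.mul_le_mul_right q (Nat.succ_le_of_lt hce.2)
  rw [Nat.succ_mul] at this
  rw [show c * q + e + q * j = (c + j) * q + e by ring]
  exact eq_zero_or_not_dvd_mul_add hq hm (by omega)

theorem eq_or_lt_of_sub_one_dvd_sq_sub_one {q n₀ q₁ : ℕ} (hq : 2 ≤ q) (hn₀ : n₀ < q)
    (hdvd : n₀ * q + q₁ - 1 ∣ q ^ 2 - 1) : n₀ * q + q₁ = q ∨ n₀ < q₁ := by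
  have hN : 1 ≤ n₀ * q + q₁ := by
    by_contra! h
    rw [show n₀ * q + q₁ - 1 = 0 by omega, zero_dvd_iff] at hdvd
    nlinarith [Nat.sub_eq_zero_iff_le.1 hdvd]
  have hdvdZ : ((n₀ : ℤ) * q + q₁ - 1) ∣ (q : ℤ) ^ 2 - 1 := by
    have := Int.natCast_dvd_natCast.2 hdvd
    push_cast [Nat.cast_sub hN, Nat.cast_sub (Nat.one_le_pow 2 q (by omega))] at this
    exact this
  -- `n - 1` divides `q (n - 1) - n₀ (q² - 1) = (q₁ - 1) q + n₀`, which bounds it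
  have key : ((n₀ : ℤ) * q + q₁ - 1) ∣ ((q₁ : ℤ) - 1) * q + n₀ := by
    rw [show ((q₁ : ℤ) - 1) * q + n₀ = q * ((n₀ : ℤ) * q + q₁ - 1) - n₀ * ((q : ℤ) ^ 2 - 1) by
      ring]
    exact dvd_sub (dvd_mul_left _ _) (hdvdZ.mul_left _)
  rcases Nat.eq_zero_or_pos q₁ with rfl | hq₁
  · have hle := Int.le_of_dvd (by push_cast; omega) (dvd_neg.2 key)
    push_cast at hle
    obtain rfl : n₀ = 1 := by
      have : n₀ ≠ 0 := by rintro rfl; simp at hN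
      have : n₀ ≤ 1 := by by_contra! h; nlinarith
      omega
    simp
  · right
    by_contra! h
    have hle := Int.le_of_dvd (by nlinarith) key
    nlinarith

theorem digit_bounds_of_sub_one_dvd {q n k n₀ q₁ k₀ q₀ : ℕ} (hq : 2 ≤ q) (hdvd : n - 1 ∣ q ^ 2 - 1)
    (hn : n = n₀ * q + q₁) (hn₀ : n₀ ≤ q - 1) (hk : k = k₀ * q + q₀)
    (hk₀ : k₀ < (q₁ + n₀ * q - q₀) / q) (hq₀ : q₀ ≤ q - 1) (hq₁q₀ : (q₁ : ℤ) - q₀ ≤ 1) :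
    k + q ≤ n ∧ k₀ < n₀ ∧ n₀ ≤ k₀ + q₀ + 1 ∧ k₀ + q₀ + 2 ≤ q + q₁ := by
  have hkn : k₀ * q + q + q₀ ≤ n₀ * q + q₁ := by
    have := (Nat.le_div_iff_mul_le (by omega)).1 (Nat.succ_le_of_lt hk₀)
    rw [Nat.succ_mul] at this
    omega
  have hk₀n₀ : k₀ < n₀ := Nat.lt_of_mul_lt_mul_right (a := q) (by omega)
  refine ⟨by omega, hk₀n₀, ?_⟩
  rcases eq_or_lt_of_sub_one_dvd_sq_sub_one hq (by omega) (hn ▸ hdvd) with h | h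
  · -- `n = q` forces `n₀ = 1` and `q₁ = 0`, hence `k₀ = q₀ = 0`
    obtain rfl : n₀ = 1 := by
      have : n₀ ≤ 1 := by by_contra! h'; nlinarith
      omega
    obtain rfl : k₀ = 0 := by simpa [show q ≠ 0 by omega] using (by omega : k₀ * q = 0)
    omega
  · omega

theorem ellF_eq {q n₀ q₁ k₀ q₀ : ℕ} (h₁ : k₀ < n₀) (h₂ : n₀ ≤ k₀ + q₀ + 1)
    (h₃ : k₀ + q₀ + 2 ≤ q + q₁) : ellF q n₀ q₁ k₀ q₀ = ((k₀ + 1) * (n₀ - k₀) : ℕ) := by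
  unfold ellF
  rw [if_pos (by omega), if_neg (by omega)]
  push_cast [Nat.cast_sub h₁.le]
  ring

theorem exists_mds_code_hermitianHull_dim_ge_of_sub_one_dvd_general
    {q n k n₀ q₁ k₀ q₀ : ℕ} (hq : IsPrimePow q)
    (hdvd : (n - 1) ∣ (q ^ 2 - 1))
    (hn : n = n₀ * q + q₁) (hn₀u : n₀ ≤ q - 1)
    (hk : k = k₀ * q + q₀) (hk₀u : k₀ < (q₁ + n₀ * q - q₀) / q)
    (hq₀ : q₀ ≤ q - 1) (hq₁q₀ : (q₁ : ℤ) - (q₀ : ℤ) ≤ 1)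
    {F : Type*} [Field F] [Fintype F] (hF : Fintype.card F = q ^ 2) :
    ∃ C : Submodule F (Fin n → F),
      Module.finrank F ↥C = k + 1
      ∧ (∀ c ∈ C, c ≠ 0 → n - k ≤ wt c)
      ∧ (∃ c ∈ C, c ≠ 0 ∧ wt c = n - k)
      ∧ ellF q n₀ q₁ k₀ q₀ ≤ (Module.finrank F ↥(C ⊓ hdual q C) : ℤ) := by
  have hq2 := hq.two_le
  obtain ⟨hkn, hk₀n₀, hn₀q₀, hk₀q₀⟩ :=
    digit_bounds_of_sub_one_dvd hq2 hdvd hn hn₀u hk hk₀u hq₀ hq₁q₀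
  obtain ⟨p, e, hp, -, rfl⟩ := hq
  obtain ⟨m, rfl⟩ : ∃ m, n = m + 1 := ⟨n - 1, by omega⟩
  replace hdvd : m ∣ (p ^ e) ^ 2 - 1 := by simpa using hdvd
  have hsplit : (n₀ - k₀) * p ^ e + k₀ * p ^ e = n₀ * p ^ e := by
    rw [← add_mul, Nat.sub_add_cancel hk₀n₀.le]
  obtain ⟨C, hdim, hwt, hwt', hhull⟩ := exists_mds_code_card_le_finrank_hermitianHull
    hp.nat_prime hF hdvd (by omega) (hullExponents (p ^ e) k₀ (n₀ - k₀))
    (fun s hs => hk ▸ le_of_mem_hullExponents hs (by omega))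
    fun s hs j hj => eq_zero_or_not_dvd_of_mem_hullExponents (by omega) hdvd hs (by omega)
  refine ⟨C, hdim, hwt, hwt', ?_⟩
  rw [ellF_eq hk₀n₀ hn₀q₀ hk₀q₀,
    ← card_hullExponents (k₀ := k₀) (show n₀ - k₀ ≤ p ^ e by omega)]
  exact_mod_cast hhull

/-- **Corollary 1.** Let `n ≠ q²` with `(n−1) ∣ (q²−1)`,
`n = n₀q + q₁` and `k = k₀q + q₀` subject to the stated constraints.  Then over
`𝔽_{q²}` there is an `[n, k+1, n−k]_{q²}` MDS linear code whose Hermitian hull has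
dimension at least the four-case quantity `ℓ`. -/
theorem exists_mds_code_hermitianHull_dim_ge_of_sub_one_dvd
    {q n k n₀ q₁ k₀ q₀ : ℕ} (hq : IsPrimePow q)
    (hnq : n ≠ q ^ 2) (hdvd : (n - 1) ∣ (q ^ 2 - 1))
    (hn : n = n₀ * q + q₁) (hn₀l : 1 ≤ n₀) (hn₀u : n₀ ≤ q - 1) (hq₁ : q₁ ≤ q - 1)
    (hk : k = k₀ * q + q₀) (hk₀l : 1 ≤ k₀) (hk₀u : k₀ < (q₁ + n₀ * q - q₀) / q)
    (hq₀ : q₀ ≤ q - 1) (hq₁q₀ : (q₁ : ℤ) - (q₀ : ℤ) ≤ 1)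
    {F : Type*} [Field F] [Fintype F] (hF : Fintype.card F = q ^ 2) :
    ∃ C : Submodule F (Fin n → F),
      Module.finrank F ↥C = k + 1
      ∧ (∀ c ∈ C, c ≠ 0 → n - k ≤ wt c)
      ∧ (∃ c ∈ C, c ≠ 0 ∧ wt c = n - k)
      ∧ ellF q n₀ q₁ k₀ q₀ ≤ (Module.finrank F ↥(C ⊓ hdual q C) : ℤ) :=
  exists_mds_code_hermitianHull_dim_ge_of_sub_one_dvd_general hq hdvd hn hn₀u hk hk₀u hq₀ hq₁q₀ hF

end
end

section
/- Let q > 2 be a prime power. If there exists an [n,k,d]_{q²} linear code whose Hermitian hull has dimension ℓ′, then for every integer ℓ with 0 ≤ ℓ ≤ ℓ′ there exists an [n,k,d]_{q²} linear code whose Hermitian hull has dimension exactly ℓ. -/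
noncomputable section

/-!
Let `z'` denote `z` with its `j`-th coordinate multiplied by `α ≠ 0`. Then
`⟨z', c'⟩_H = ⟨z, c⟩_H + (α ^ (q + 1) - 1) z_j c_j ^ q`, while dimension and weights are unchanged.
Over `𝔽_{q²}` the Hermitian form is symmetric up to Frobenius, so `⟨z, x⟩_H = 0` for `z ∈ C` and `x`
in the hull. If `α ^ (q + 1) ≠ 1` and the hull contains `x` with `x_j ≠ 0`, testing a codeword `z'`
of the rescaled hull against `x'` forces `z_j = 0`: the new hull is the image of the hyperplane
`{z ∈ Hull_H(C) | z_j = 0}` of the old one. Such an `α` exists when `q > 2`, because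
`q + 1 < q² - 1 = #𝔽_{q²}ˣ` and this group is cyclic; iterating lowers the hull dimension one by one.
-/

theorem Submodule.finrank_inf_ker_add_one {K V : Type*} [Field K] [AddCommGroup V] [Module K V]
    {H : Submodule K V} [FiniteDimensional K H] {f : V →ₗ[K] K} {x : V} (hxH : x ∈ H)
    (hfx : f x ≠ 0) : Module.finrank K ↥(H ⊓ LinearMap.ker f) + 1 = Module.finrank K H := by
  have hf : f ∘ₗ H.subtype ≠ 0 := fun h => hfx (LinearMap.congr_fun h ⟨x, hxH⟩)
  rw [← Module.Dual.finrank_ker_add_one_of_ne_zero hf, LinearMap.ker_comp,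
    ← Submodule.map_comap_subtype, Submodule.finrank_map_subtype_eq]

section FiniteField

variable {F : Type*} [Field F] [Fintype F] {q : ℕ}

theorem FiniteField.exists_prime_pow_eq_of_card_eq_sq (hF : Fintype.card F = q ^ 2) :
    ∃ p k, p.Prime ∧ CharP F p ∧ q = p ^ k := by
  obtain ⟨p, hchar⟩ := CharP.exists F
  obtain ⟨m, hp, hcard⟩ := FiniteField.card F p
  have hq : q ∣ p ^ (m : ℕ) := hcard ▸ hF ▸ dvd_pow_self q two_ne_zero
  obtain ⟨k, -, rfl⟩ := (Nat.dvd_prime_pow hp).1 hq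
  exact ⟨p, k, hp, hchar, rfl⟩

theorem FiniteField.exists_pow_succ_ne_one (hF : Fintype.card F = q ^ 2) (hq : 2 < q) :
    ∃ α : Fˣ, (α : F) ^ (q + 1) ≠ 1 := by
  suffices ∃ α : Fˣ, α ^ (q + 1) ≠ 1 by simpa [← Units.val_pow_eq_pow_val, Units.val_eq_one]
  refine Monoid.exponent_min _ (Nat.succ_pos q) ?_
  rw [IsCyclic.exponent_eq_card, Nat.card_units, Nat.card_eq_fintype_card, hF, sq]
  have := Nat.mul_le_mul_right q hq
  omega

end FiniteField

section HermitianForm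

variable {F : Type*} [Field F] {q n : ℕ}

def hermInner (q : ℕ) (x y : Fin n → F) : F := ∑ i, x i * y i ^ q

theorem mem_hdual {C : Submodule F (Fin n → F)} {x : Fin n → F} :
    x ∈ hdual q C ↔ ∀ c ∈ C, hermInner q x c = 0 := Iff.rfl

theorem hermInner_eq_pow_hermInner [Fintype F] (hF : Fintype.card F = q ^ 2)
    (x z : Fin n → F) : hermInner q z x = hermInner q x z ^ q := by
  obtain ⟨p, k, hp, hchar, rfl⟩ := FiniteField.exists_prime_pow_eq_of_card_eq_sq hF
  have : Fact p.Prime := ⟨hp⟩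
  rw [hermInner, hermInner, sum_pow_char_pow]
  refine Finset.sum_congr rfl fun i _ => ?_
  rw [mul_pow, ← pow_mul, ← sq, ← hF, FiniteField.pow_card, mul_comm]

theorem hermInner_eq_zero_of_mem_hdual [Fintype F] (hF : Fintype.card F = q ^ 2)
    {C : Submodule F (Fin n → F)} {x z : Fin n → F} (hx : x ∈ hdual q C) (hz : z ∈ C) :
    hermInner q z x = 0 := by
  have hq : q ≠ 0 := by
    rintro rfl
    exact Fintype.card_ne_zero (hF.trans (zero_pow two_ne_zero))
  rw [hermInner_eq_pow_hermInner hF, mem_hdual.1 hx z hz, zero_pow hq]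

def scaleCoord (j : Fin n) (α : Fˣ) : (Fin n → F) ≃ₗ[F] (Fin n → F) :=
  LinearEquiv.piCongrRight fun i => LinearEquiv.smulOfUnit ((Pi.mulSingle j α : Fin n → Fˣ) i)

theorem scaleCoord_apply (j : Fin n) (α : Fˣ) (z : Fin n → F) (i : Fin n) :
    scaleCoord j α z i = ((Pi.mulSingle j α : Fin n → Fˣ) i : F) * z i := rfl

theorem wt_scaleCoord (j : Fin n) (α : Fˣ) (z : Fin n → F) : wt (scaleCoord j α z) = wt z := by
  simp [wt, scaleCoord_apply]

theorem hermInner_scaleCoord (j : Fin n) (α : Fˣ) (z c : Fin n → F) :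
    hermInner q (scaleCoord j α z) (scaleCoord j α c)
      = hermInner q z c + ((α : F) ^ (q + 1) - 1) * (z j * c j ^ q) := by
  have hterm (i : Fin n) : scaleCoord j α z i * scaleCoord j α c i ^ q
      = z i * c i ^ q
        + (Pi.single j (((α : F) ^ (q + 1) - 1) * (z j * c j ^ q)) : Fin n → F) i := by
    rcases eq_or_ne i j with rfl | hij
    · simp only [scaleCoord_apply, Pi.mulSingle_eq_same, Pi.single_eq_same, mul_pow]
      ring
    · simp [scaleCoord_apply, hij]
  simp only [hermInner, hterm, Finset.sum_add_distrib, Finset.sum_pi_single', Finset.mem_univ,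
    if_true]

end HermitianForm

section MinDist

variable {F : Type*} [Field F] {n : ℕ}

def HasMinDist (C : Submodule F (Fin n → F)) (d : ℕ) : Prop :=
  (∀ c ∈ C, c ≠ 0 → d ≤ wt c) ∧ ∃ c ∈ C, c ≠ 0 ∧ wt c = d

theorem HasMinDist.map {C : Submodule F (Fin n → F)} {d : ℕ} (hC : HasMinDist C d)
    (e : (Fin n → F) ≃ₗ[F] (Fin n → F)) (he : ∀ z, wt (e z) = wt z) :
    HasMinDist (C.map e.toLinearMap) d := by
  obtain ⟨hle, c, hc, hc0, hcd⟩ := hC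
  refine ⟨?_, e c, Submodule.mem_map_of_mem hc, e.map_ne_zero_iff.2 hc0, (he c).trans hcd⟩
  rintro _ ⟨z, hz, rfl⟩ hz0
  exact (he z).symm ▸ hle z hz (e.map_ne_zero_iff.1 hz0)

end MinDist

section HullReduction

variable {F : Type*} [Field F] [Fintype F] {q n : ℕ}

theorem hull_map_scaleCoord (hF : Fintype.card F = q ^ 2)
    {C : Submodule F (Fin n → F)} {j : Fin n} {α : Fˣ} (hα : (α : F) ^ (q + 1) ≠ 1)
    {x : Fin n → F} (hx : x ∈ C ⊓ hdual q C) (hxj : x j ≠ 0) :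
    C.map (scaleCoord j α).toLinearMap ⊓ hdual q (C.map (scaleCoord j α).toLinearMap)
      = (C ⊓ hdual q C ⊓ LinearMap.ker (LinearMap.proj j)).map (scaleCoord j α).toLinearMap := by
  have hα1 : (α : F) ^ (q + 1) - 1 ≠ 0 := sub_ne_zero.2 hα
  ext w
  constructor
  · rintro ⟨⟨z, hzC, rfl⟩, hw⟩
    have horth (c : Fin n → F) (hc : c ∈ C) :
        hermInner q z c + ((α : F) ^ (q + 1) - 1) * (z j * c j ^ q) = 0 := by
      rw [← hermInner_scaleCoord]
      exact mem_hdual.1 hw _ (Submodule.mem_map_of_mem hc)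
    have hzj : z j = 0 := by
      have hzx := horth x hx.1
      rw [hermInner_eq_zero_of_mem_hdual hF hx.2 hzC, zero_add] at hzx
      simpa [hα1, hxj] using hzx
    refine ⟨z, ⟨⟨hzC, mem_hdual.2 fun c hc => ?_⟩, hzj⟩, rfl⟩
    simpa [hzj] using horth c hc
  · rintro ⟨z, ⟨⟨hzC, hzD⟩, hzj⟩, rfl⟩
    refine ⟨Submodule.mem_map_of_mem hzC, mem_hdual.2 ?_⟩
    rintro _ ⟨c, hc, rfl⟩
    have hzj' : z j = 0 := hzj
    rw [LinearEquiv.coe_coe, hermInner_scaleCoord, mem_hdual.1 hzD c hc, hzj']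
    ring

theorem exists_hull_finrank_eq_of_finrank_eq_succ (hF : Fintype.card F = q ^ 2) (hq : 2 < q)
    {C : Submodule F (Fin n → F)} {d m : ℕ} (hC : HasMinDist C d)
    (hhull : Module.finrank F ↥(C ⊓ hdual q C) = m + 1) :
    ∃ D : Submodule F (Fin n → F), Module.finrank F ↥D = Module.finrank F ↥C ∧
      HasMinDist D d ∧ Module.finrank F ↥(D ⊓ hdual q D) = m := by
  obtain ⟨α, hα⟩ := FiniteField.exists_pow_succ_ne_one hF hq
  have hhull_ne : C ⊓ hdual q C ≠ ⊥ := fun h => by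
    rw [h, finrank_bot] at hhull
    omega
  obtain ⟨x, hx, hx0⟩ := Submodule.exists_mem_ne_zero_of_ne_bot hhull_ne
  obtain ⟨j, hxj⟩ := Function.ne_iff.1 hx0
  refine ⟨C.map (scaleCoord j α).toLinearMap, LinearEquiv.finrank_map_eq _ _,
    hC.map _ (wt_scaleCoord j α), ?_⟩
  have hdrop := Submodule.finrank_inf_ker_add_one (f := LinearMap.proj j) hx hxj
  rw [hull_map_scaleCoord hF hα hx hxj, LinearEquiv.finrank_map_eq]
  omega

theorem exists_hull_finrank_eq_of_le (hF : Fintype.card F = q ^ 2) (hq : 2 < q)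
    {C : Submodule F (Fin n → F)} {d ℓ : ℕ} (hC : HasMinDist C d)
    (hℓ : ℓ ≤ Module.finrank F ↥(C ⊓ hdual q C)) :
    ∃ D : Submodule F (Fin n → F), Module.finrank F ↥D = Module.finrank F ↥C ∧
      HasMinDist D d ∧ Module.finrank F ↥(D ⊓ hdual q D) = ℓ := by
  induction hm : Module.finrank F ↥(C ⊓ hdual q C) generalizing C with
  | zero => exact ⟨C, rfl, hC, by omega⟩
  | succ m ih =>
    rcases hℓ.lt_or_eq with hlt | heq
    · obtain ⟨D, hDC, hD, hDhull⟩ := exists_hull_finrank_eq_of_finrank_eq_succ hF hq hC hm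
      obtain ⟨E, hED, hE, hEhull⟩ := ih hD (by omega) hDhull
      exact ⟨E, hED.trans hDC, hE, hEhull⟩
    · exact ⟨C, rfl, hC, heq.symm⟩

end HullReduction

theorem exists_code_hermitianHull_dim_eq_of_le_general
    {q n k d ℓ' : ℕ} (hq2 : 2 < q)
    {F : Type*} [Field F] [Fintype F] (hF : Fintype.card F = q ^ 2)
    (C : Submodule F (Fin n → F))
    (hdim : Module.finrank F ↥C = k)
    (hd : ∀ c ∈ C, c ≠ 0 → d ≤ wt c) (hd' : ∃ c ∈ C, c ≠ 0 ∧ wt c = d)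
    (hhull : Module.finrank F ↥(C ⊓ hdual q C) = ℓ') :
    ∀ ℓ ≤ ℓ', ∃ D : Submodule F (Fin n → F),
      Module.finrank F ↥D = k
      ∧ (∀ c ∈ D, c ≠ 0 → d ≤ wt c) ∧ (∃ c ∈ D, c ≠ 0 ∧ wt c = d)
      ∧ Module.finrank F ↥(D ⊓ hdual q D) = ℓ := by
  intro ℓ hℓ
  obtain ⟨D, hDC, ⟨hDd, hDd'⟩, hDhull⟩ :=
    exists_hull_finrank_eq_of_le hF hq2 ⟨hd, hd'⟩ (hhull ▸ hℓ : ℓ ≤ _)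
  exact ⟨D, hDC.trans hdim, hDd, hDd', hDhull⟩

/-- Let `q > 2` be a prime power.  If there is an `[n,k,d]_{q²}`
linear code whose Hermitian hull has dimension `ℓ′`, then for every `0 ≤ ℓ ≤ ℓ′` there
is an `[n,k,d]_{q²}` linear code whose Hermitian hull has dimension exactly `ℓ`. -/
theorem exists_code_hermitianHull_dim_eq_of_le
    {q n k d ℓ' : ℕ} (hq : IsPrimePow q) (hq2 : 2 < q)
    {F : Type*} [Field F] [Fintype F] (hF : Fintype.card F = q ^ 2)
    (C : Submodule F (Fin n → F))
    (hdim : Module.finrank F ↥C = k)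
    (hd : ∀ c ∈ C, c ≠ 0 → d ≤ wt c) (hd' : ∃ c ∈ C, c ≠ 0 ∧ wt c = d)
    (hhull : Module.finrank F ↥(C ⊓ hdual q C) = ℓ') :
    ∀ ℓ ≤ ℓ', ∃ D : Submodule F (Fin n → F),
      Module.finrank F ↥D = k
      ∧ (∀ c ∈ D, c ≠ 0 → d ≤ wt c) ∧ (∃ c ∈ D, c ≠ 0 ∧ wt c = d)
      ∧ Module.finrank F ↥(D ⊓ hdual q D) = ℓ :=
  exists_code_hermitianHull_dim_eq_of_le_general hq2 hF C hdim hd hd' hhull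

end
end
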